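/- arXiv:1410.6721 — 2 statements merged into one kernel-verified Lean document; each statement's English description precedes it below -/
import Mathlib

section
/- Let 0 < p < 1/2 and let φ : ℕ₊ → [1,∞) be a nondecreasing function satisfying limsup_{n→∞} n^{1/p−2}/φ(n) = +∞. Then, with f_m := D_{2^{2m+1}}^w − D_{2^{2m}}^w and q_m := 2^{2m} + 2^{2m−2} + ⋯ + 2² + 2⁰, one has sup_{m ≥ 1} ( ‖ σ_{q_m}^κ f_m / φ(q_m) ‖_{L_{p,∞}(μ)} / ‖f_m*‖_{L_p(μ)} ) = +∞; in particular the maximal operator sup_{n≥1} |σ_n^κ f|/φ(n) is not bounded from the Hardy space H_p(G) to L_{p,∞}(G). -/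
open MeasureTheory ENNReal

noncomputable section

/-- The Walsh group: countable product of copies of ℤ₂. -/
abbrev G : Type := ℕ → ZMod 2

instance : TopologicalSpace (ZMod 2) := ⊥
instance : DiscreteTopology (ZMod 2) := ⟨rfl⟩
instance : IsTopologicalAddGroup (ZMod 2) :=
  { continuous_add := continuous_of_discreteTopology
    continuous_neg := continuous_of_discreteTopology }
instance : MeasurableSpace G := borel G
instance : BorelSpace G := ⟨rfl⟩

/-- The normalized Haar (= product) measure on `G`. -/
def μ : Measure G := Measure.addHaarMeasure (⊤ : TopologicalSpace.PositiveCompacts G)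

/-- The `k`-th Rademacher function. -/
def rad (k : ℕ) (x : G) : ℝ := (-1 : ℝ) ^ (x k).val

/-- `|n| = ⌊log₂ n⌋`. -/
def lg (n : ℕ) : ℕ := Nat.log 2 n

/-- The Walsh–Paley functions. -/
def walsh (n : ℕ) (x : G) : ℝ :=
  ∏ k ∈ Finset.range (n + 1), rad k x ^ (n.testBit k).toNat

/-- The Walsh–Kaczmarz functions. -/
def kacz (n : ℕ) (x : G) : ℝ :=
  if n = 0 then 1
  else rad (lg n) x *
    ∏ k ∈ Finset.range (lg n), rad (lg n - 1 - k) x ^ (n.testBit k).toNat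

/-- Walsh–Paley Dirichlet kernel. -/
def DW (n : ℕ) (x : G) : ℝ := ∑ k ∈ Finset.range n, walsh k x

/-- Walsh–Kaczmarz Dirichlet kernel. -/
def DK (n : ℕ) (x : G) : ℝ := ∑ k ∈ Finset.range n, kacz k x

/-- Walsh–Paley Fejér kernel (with `KW 0 = 0`). -/
def KW (n : ℕ) (x : G) : ℝ := (∑ k ∈ Finset.range n, DW k x) / n

/-- Walsh–Kaczmarz Fejér kernel. -/
def KK (n : ℕ) (x : G) : ℝ := (∑ k ∈ Finset.range n, DK k x) / n

/-- Reversal of the first `A` coordinates. -/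
def tau (A : ℕ) (x : G) : G := fun k => if k < A then x (A - 1 - k) else x k

/-- Walsh–Fourier coefficients. -/
def coefW (f : G → ℝ) (i : ℕ) : ℝ := ∫ x, f x * walsh i x ∂μ

/-- Walsh–Kaczmarz–Fourier coefficients. -/
def coefK (f : G → ℝ) (i : ℕ) : ℝ := ∫ x, f x * kacz i x ∂μ

/-- Partial sums of the Walsh–Fourier series. -/
def SW (f : G → ℝ) (M : ℕ) (x : G) : ℝ := ∑ i ∈ Finset.range M, coefW f i * walsh i x

/-- Partial sums of the Walsh–Kaczmarz–Fourier series. -/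
def SK (f : G → ℝ) (M : ℕ) (x : G) : ℝ := ∑ i ∈ Finset.range M, coefK f i * kacz i x

/-- Fejér means of the Walsh–Kaczmarz–Fourier series. -/
def sigmaK (f : G → ℝ) (n : ℕ) (x : G) : ℝ := (∑ j ∈ Finset.range n, SK f j x) / n

/-- The dyadic martingale maximal function. -/
def fstar (f : G → ℝ) (x : G) : ℝ≥0∞ := ⨆ n : ℕ, ENNReal.ofReal |SW f (2 ^ n) x|

/-- Dyadic interval of rank `n` around `x`. -/
def cyl (n : ℕ) (x : G) : Set G := {y : G | ∀ k < n, y k = x k}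

/-- Dyadic interval `I_n` around `0`. -/
def In (n : ℕ) : Set G := cyl n 0

/-- `e t`: the element of `G` whose `t`-th coordinate is `1` and the rest are `0`. -/
def e (t : ℕ) : G := fun k => if k = t then 1 else 0

/-- `q_m = 2^{2m} + 2^{2m-2} + ⋯ + 2² + 2⁰`. -/
def qA (m : ℕ) : ℕ := ∑ i ∈ Finset.range (m + 1), 4 ^ i

/-- `f_m = D_{2^{2m+1}}^w − D_{2^{2m}}^w`. -/
def fm (m : ℕ) (x : G) : ℝ := DW (2 ^ (2 * m + 1)) x - DW (2 ^ (2 * m)) x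

/-- The weak `L^p` quasinorm `‖f‖_{L_{p,∞}} = sup_{λ>0} λ · μ{|f|>λ}^{1/p}`. -/
def wnorm (f : G → ℝ) (p : ℝ) : ℝ≥0∞ :=
  ⨆ (l : ℝ) (_ : 0 < l), ENNReal.ofReal l * μ {x : G | l < |f x|} ^ (1 / p)

/-- The set `J_N^{m,l}` (with `m : ℤ`, `-1 ≤ m ≤ l`). -/
def Jset (N l : ℕ) (m : ℤ) : Set G :=
  {x : G | (∀ j : ℕ, m < (j : ℤ) → j < l → x j = 0) ∧ x l = 1 ∧
    (∀ j : ℕ, l < j → j < N → x j = 0) ∧ (0 ≤ m → x m.toNat = 1)}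
section Meas

instance : IsFiniteMeasure μ := by
  constructor
  rw [show (Set.univ : Set G) = ((⊤ : TopologicalSpace.PositiveCompacts G) : Set G) from
    (TopologicalSpace.PositiveCompacts.coe_top).symm]
  rw [μ, Measure.addHaarMeasure_self]
  exact one_lt_top

instance : Measure.IsAddLeftInvariant μ := by unfold μ; infer_instance

example : MeasurableAdd G := by infer_instance

lemma meas_univ : μ Set.univ = 1 := by
  rw [show (Set.univ : Set G) = ((⊤ : TopologicalSpace.PositiveCompacts G) : Set G) from
    (TopologicalSpace.PositiveCompacts.coe_top).symm]
  rw [μ, Measure.addHaarMeasure_self]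

end Meas

lemma measSet (S : Finset ℕ) (z : G) : MeasurableSet {x : G | ∀ k ∈ S, x k = z k} := by
  have h : {x : G | ∀ k ∈ S, x k = z k} = ⋂ k ∈ (S : Set ℕ), {x : G | x k = z k} := by
    ext x; simp
  rw [h]
  exact MeasurableSet.biInter S.countable_toSet fun k _ =>
    (isClosed_eq (continuous_apply k) continuous_const).measurableSet

lemma zmod2_cases (u v : ZMod 2) : u = v ∨ u = v + 1 := by revert u v; decide

lemma zmod2_ne (v : ZMod 2) : v ≠ v + 1 := by revert v; decide

lemma measCyl (S : Finset ℕ) (z : G) :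
    μ {x : G | ∀ k ∈ S, x k = z k} = 2⁻¹ ^ S.card := by
  classical
  induction S using Finset.induction_on with
  | empty => simpa using meas_univ
  | @insert a S ha IH =>
    set T := {x : G | ∀ k ∈ S, x k = z k} with hTdef
    have hT : MeasurableSet T := measSet S z
    have key : ∀ c : ZMod 2,
        μ (T ∩ {x | x a = c + 1}) = μ (T ∩ {x | x a = c}) := by
      intro c
      have hpre : (fun y : G => e a + y) ⁻¹' (T ∩ {x | x a = c})
          = T ∩ {x | x a = c + 1} := by
        have came : ∀ u v : ZMod 2, 1 + u = v → u = v + 1 := by decide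
        have came' : ∀ u : ZMod 2, 1 + (u + 1) = u := by decide
        ext y
        simp only [Set.mem_preimage, Set.mem_inter_iff, Set.mem_setOf_eq, hTdef]
        have hak : ∀ k, k ∈ S → (e a + y) k = y k := by
          intro k hk
          have hne : k ≠ a := fun h => ha (h ▸ hk)
          show e a k + y k = y k
          simp [e, hne]
        have haa : (e a + y) a = 1 + y a := by
          show e a a + y a = 1 + y a
          simp [e]
        constructor
        · rintro ⟨h1, h2⟩
          exact ⟨fun k hk => by rw [← hak k hk]; exact h1 k hk,
            came _ _ (by rw [← haa]; exact h2)⟩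
        · rintro ⟨h1, h2⟩
          refine ⟨fun k hk => by rw [hak k hk]; exact h1 k hk, ?_⟩
          rw [haa, h2, came']
      rw [← hpre, measure_preimage_add]
    set A := T ∩ {x | x a = z a} with hA
    set B := T ∩ {x | x a = z a + 1} with hB
    have hBmeas : MeasurableSet B :=
      hT.inter (isClosed_eq (continuous_apply a) continuous_const).measurableSet
    have hAB : {x : G | ∀ k ∈ insert a S, x k = z k} = A := by
      ext x
      simp only [hA, hTdef, Set.mem_inter_iff, Set.mem_setOf_eq, Finset.forall_mem_insert]
      tauto
    have hsplit : T = A ∪ B := by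
      ext x
      simp only [hA, hB, Set.mem_inter_iff, Set.mem_union, Set.mem_setOf_eq]
      constructor
      · intro hx
        rcases zmod2_cases (x a) (z a) with h | h
        · exact Or.inl ⟨hx, h⟩
        · exact Or.inr ⟨hx, h⟩
      · rintro (⟨hx, _⟩ | ⟨hx, _⟩) <;> exact hx
    have hdisj : Disjoint A B := by
      rw [Set.disjoint_left]
      rintro x ⟨_, h1⟩ ⟨_, h2⟩
      have h1' : x a = z a := h1
      have h2' : x a = z a + 1 := h2
      rw [h1'] at h2'
      exact zmod2_ne _ h2'
    have hTsum : μ T = μ A + μ A := by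
      rw [hsplit, measure_union hdisj hBmeas, key (z a)]
    have hAval : μ A = 2⁻¹ * μ T := by
      rw [hTsum, ← two_mul, ← mul_assoc, ENNReal.inv_mul_cancel two_ne_zero ENNReal.ofNat_ne_top,
        one_mul]
    rw [hAB, hAval, IH, Finset.card_insert_of_notMem ha, pow_succ, mul_comm]

section WalshAlg

lemma rad_mul_self (k : ℕ) (x : G) : rad k x * rad k x = 1 := by
  unfold rad
  rw [← pow_add, ← two_mul, pow_mul]
  norm_num

lemma rad_sq_cases (k : ℕ) (x : G) : rad k x = 1 ∨ rad k x = -1 := by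
  unfold rad
  rcases Nat.even_or_odd ((x k).val) with h | h
  · left; exact h.neg_one_pow
  · right; exact h.neg_one_pow

lemma rad_abs (k : ℕ) (x : G) : |rad k x| = 1 := by
  rcases rad_sq_cases k x with h | h <;> rw [h] <;> norm_num

lemma rad_zero_coord {k : ℕ} {x : G} (h : x k = 0) : rad k x = 1 := by
  unfold rad; rw [h]; norm_num

lemma rad_one_coord {k : ℕ} {x : G} (h : x k = 1) : rad k x = -1 := by
  unfold rad
  rw [h]
  norm_num [ZMod.val_one]

lemma prod_ext {n M M' : ℕ} (x : G) (hMM : M ≤ M') (h : n < 2 ^ M) :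
    ∏ k ∈ Finset.range M', rad k x ^ (n.testBit k).toNat
      = ∏ k ∈ Finset.range M, rad k x ^ (n.testBit k).toNat := by
  refine (Finset.prod_subset (Finset.range_subset_range.mpr hMM) ?_).symm
  intro k _ hk
  rw [Finset.mem_range, not_lt] at hk
  have : n < 2 ^ k := lt_of_lt_of_le h (Nat.pow_le_pow_right (by norm_num) hk)
  rw [Nat.testBit_lt_two_pow this]
  rfl

lemma walsh_eq {n M : ℕ} (x : G) (h : n < 2 ^ M) :
    walsh n x = ∏ k ∈ Finset.range M, rad k x ^ (n.testBit k).toNat := by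
  unfold walsh
  rcases le_total (n + 1) M with hM | hM
  · exact (prod_ext x hM (lt_trans (Nat.lt_two_pow_self (n := n)) (Nat.pow_lt_pow_right one_lt_two (Nat.lt_succ_self n)))).symm
  · exact (prod_ext x hM h)

lemma walsh_zero (x : G) : walsh 0 x = 1 := by
  rw [walsh_eq x (show 0 < 2 ^ 0 by norm_num)]
  simp

lemma walsh_mul {i j : ℕ} (x : G) : walsh i x * walsh j x = walsh (i ^^^ j) x := by
  set M := max i j + 1 with hM
  have hi : i < 2 ^ M := lt_of_le_of_lt (le_max_left i j) (by rw [hM]; exact lt_trans (Nat.lt_two_pow_self) (Nat.pow_lt_pow_right one_lt_two (Nat.lt_succ_self _)))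
  have hj : j < 2 ^ M := lt_of_le_of_lt (le_max_right i j) (by rw [hM]; exact lt_trans (Nat.lt_two_pow_self) (Nat.pow_lt_pow_right one_lt_two (Nat.lt_succ_self _)))
  have hx : i ^^^ j < 2 ^ M := Nat.xor_lt_two_pow hi hj
  rw [walsh_eq x hi, walsh_eq x hj, walsh_eq x hx, ← Finset.prod_mul_distrib]
  apply Finset.prod_congr rfl
  intro k _
  rw [Nat.testBit_xor]
  rcases Nat.testBit i k with _ | _ <;> rcases Nat.testBit j k with _ | _ <;>
    simp [rad_mul_self]

lemma walsh_two_pow_add {A r : ℕ} (x : G) (hr : r < 2 ^ A) :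
    walsh (2 ^ A + r) x = rad A x * walsh r x := by
  have h2 : 2 ^ A + r < 2 ^ (A + 1) := by
    have : r < 2 ^ A := hr
    rw [pow_succ]
    omega
  rw [walsh_eq x h2, Finset.prod_range_succ, walsh_eq x hr]
  rw [Nat.testBit_two_pow_add_eq, Nat.testBit_lt_two_pow hr]
  have : ∀ k ∈ Finset.range A, rad k x ^ ((2 ^ A + r).testBit k).toNat
      = rad k x ^ (r.testBit k).toNat := by
    intro k hk
    rw [Finset.mem_range] at hk
    rw [Nat.testBit_two_pow_add_gt hk]
  rw [Finset.prod_congr rfl this]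
  simp [mul_comm]

lemma walsh_two_pow (A : ℕ) (x : G) : walsh (2 ^ A) x = rad A x := by
  have := walsh_two_pow_add x (show 0 < 2 ^ A from Nat.pow_pos (by norm_num))
  rw [add_zero] at this
  rw [this, walsh_zero, mul_one]

end WalshAlg

section Integration

instance : IsProbabilityMeasure μ := ⟨meas_univ⟩

def emb (N : ℕ) (v : Fin N → ZMod 2) : G := fun k => if h : k < N then v ⟨k, h⟩ else 0

lemma cyl_master {N : ℕ} (f : G → ℝ)
    (hf : ∀ x y : G, (∀ k, k < N → x k = y k) → f x = f y) :
    Integrable f μ ∧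
      ∫ x, f x ∂μ = (2 ^ N : ℝ)⁻¹ * ∑ v : Fin N → ZMod 2, f (emb N v) := by
  classical
  set C : (Fin N → ZMod 2) → Set G :=
    fun v => {x : G | ∀ k ∈ Finset.range N, x k = emb N v k} with hC
  have hCmeas : ∀ v, MeasurableSet (C v) := fun v => measSet _ _
  have hCμ : ∀ v, μ (C v) = 2⁻¹ ^ N := by
    intro v
    rw [hC]
    rw [measCyl (Finset.range N) (emb N v), Finset.card_range]
  have hrep : f = fun x => ∑ v : Fin N → ZMod 2,
      (C v).indicator (fun _ => f (emb N v)) x := by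
    funext x
    set w : Fin N → ZMod 2 := fun k => x k with hw
    have hxw : x ∈ C w := by
      intro k hk
      rw [Finset.mem_range] at hk
      simp [emb, hk, hw]
    rw [Finset.sum_eq_single w]
    · rw [Set.indicator_of_mem hxw]
      refine hf _ _ fun k hk => ?_
      simp [emb, hk, hw]
    · intro v _ hv
      rw [Set.indicator_of_notMem]
      intro hxv
      apply hv
      funext k
      have := hxv k (Finset.mem_range.mpr k.isLt)
      rw [hw]
      simp only [emb, k.isLt, dif_pos] at this ⊢
      rw [this]
    · intro h
      exact absurd (Finset.mem_univ w) h
  have hint : ∀ v : Fin N → ZMod 2,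
      Integrable ((C v).indicator (fun _ => f (emb N v))) μ :=
    fun v => (integrable_const _).indicator (hCmeas v)
  constructor
  · rw [hrep]
    exact integrable_finset_sum _ fun v _ => hint v
  · conv_lhs => rw [hrep]
    rw [integral_finset_sum _ fun v _ => hint v]
    have : ∀ v : Fin N → ZMod 2,
        ∫ x, (C v).indicator (fun _ => f (emb N v)) x ∂μ
          = (2 ^ N : ℝ)⁻¹ * f (emb N v) := by
      intro v
      rw [integral_indicator_const _ (hCmeas v), measureReal_def, hCμ v, smul_eq_mul]
      congr 1
      rw [ENNReal.toReal_pow, ENNReal.toReal_inv]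
      simp [inv_pow]
    rw [Finset.sum_congr rfl fun v _ => this v, ← Finset.mul_sum]

lemma walsh_cylindrical {n N : ℕ} (hn : n < 2 ^ N) (x y : G)
    (h : ∀ k, k < N → x k = y k) : walsh n x = walsh n y := by
  rw [walsh_eq x hn, walsh_eq y hn]
  refine Finset.prod_congr rfl fun k hk => ?_
  rw [Finset.mem_range] at hk
  unfold rad
  rw [h k hk]

lemma testBit_log (n : ℕ) (hn : n ≠ 0) : n.testBit (Nat.log 2 n) = true := by
  have h1 : 2 ^ Nat.log 2 n ≤ n := Nat.pow_log_le_self 2 hn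
  have h2 : n < 2 ^ (Nat.log 2 n + 1) := Nat.lt_pow_succ_log_self (by norm_num) n
  rw [Nat.testBit_eq_decide_div_mod_eq]
  have hdiv : n / 2 ^ Nat.log 2 n = 1 := by
    apply Nat.div_eq_of_lt_le
    · omega
    · rw [pow_succ] at h2; omega
  rw [hdiv]
  simp

lemma integral_walsh (n : ℕ) : ∫ x, walsh n x ∂μ = if n = 0 then 1 else 0 := by
  set N := n + 1 with hN
  have hn : n < 2 ^ N := lt_trans (Nat.lt_two_pow_self (n := n))
    (Nat.pow_lt_pow_right one_lt_two (Nat.lt_succ_self n))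
  have := (cyl_master (walsh n) (fun x y h => walsh_cylindrical hn x y h)).2
  rw [this]
  have hval : ∀ v : Fin N → ZMod 2,
      walsh n (emb N v) = ∏ j : Fin N, ((-1 : ℝ) ^ (v j).val) ^ (n.testBit j).toNat := by
    intro v
    rw [walsh_eq _ hn, ← Fin.prod_univ_eq_prod_range]
    refine Finset.prod_congr rfl fun j _ => ?_
    congr 1
    unfold rad emb
    simp [j.isLt]
  rw [Finset.sum_congr rfl fun v _ => hval v]
  rw [← Fintype.piFinset_univ, ← Finset.prod_univ_sum
    (t := fun _ : Fin N => (Finset.univ : Finset (ZMod 2)))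
    (f := fun (j : Fin N) (c : ZMod 2) => ((-1 : ℝ) ^ c.val) ^ (n.testBit (j : ℕ)).toNat)]
  by_cases h0 : n = 0
  · subst h0
    simp [Nat.zero_testBit, Finset.card_univ]
  · rw [if_neg h0]
    have hlog : (Nat.log 2 n) < N := by
      have := Nat.log_lt_of_lt_pow h0 hn
      omega
    rw [Finset.prod_eq_zero (Finset.mem_univ (⟨Nat.log 2 n, hlog⟩ : Fin N))]
    · ring
    · rw [show ((⟨Nat.log 2 n, hlog⟩ : Fin N) : ℕ) = Nat.log 2 n from rfl, testBit_log n h0]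
      have huniv : (Finset.univ : Finset (ZMod 2)) = {0, 1} := by decide
      rw [huniv, Finset.sum_insert (by decide), Finset.sum_singleton]
      norm_num [ZMod.val_one]

end Integration

section DirichletFm

lemma two_pow_succ_self (n : ℕ) : n < 2 ^ (n + 1) :=
  lt_trans (Nat.lt_two_pow_self (n := n)) (Nat.pow_lt_pow_right one_lt_two (Nat.lt_succ_self n))

lemma integrable_walsh (n : ℕ) : Integrable (walsh n) μ :=
  (cyl_master (walsh n) (fun x y h => walsh_cylindrical (two_pow_succ_self n) x y h)).1

lemma integral_walsh_mul (i j : ℕ) :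
    ∫ x, walsh i x * walsh j x ∂μ = if i = j then 1 else 0 := by
  rw [show (fun x => walsh i x * walsh j x) = walsh (i ^^^ j) from funext fun x => walsh_mul x]
  rw [integral_walsh]
  congr 1
  simp [xor_eq_zero_iff]

lemma DW_add (a b : ℕ) (x : G) :
    DW (a + b) x = DW a x + ∑ t ∈ Finset.range b, walsh (a + t) x := by
  unfold DW
  rw [Finset.sum_range_add]

lemma DW_two_pow_succ (n : ℕ) (x : G) :
    DW (2 ^ (n + 1)) x = (1 + rad n x) * DW (2 ^ n) x := by
  have h : 2 ^ (n + 1) = 2 ^ n + 2 ^ n := by rw [pow_succ]; ring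
  rw [h, DW_add]
  have : ∀ t ∈ Finset.range (2 ^ n), walsh (2 ^ n + t) x = rad n x * walsh t x :=
    fun t ht => walsh_two_pow_add x (Finset.mem_range.mp ht)
  rw [Finset.sum_congr rfl this, ← Finset.mul_sum]
  show DW (2 ^ n) x + rad n x * DW (2 ^ n) x = _
  ring

lemma DW_one (x : G) : DW 1 x = 1 := by
  unfold DW
  rw [Finset.sum_range_one, walsh_zero]

lemma DW_two_pow_prod (n : ℕ) (x : G) :
    DW (2 ^ n) x = ∏ j ∈ Finset.range n, (1 + rad j x) := by
  induction n with
  | zero => simpa using DW_one x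
  | succ n IH =>
      rw [DW_two_pow_succ, IH, Finset.prod_range_succ]
      ring

lemma DW_two_pow_eval (n : ℕ) (x : G) :
    DW (2 ^ n) x = if (∀ k < n, x k = 0) then ((2 : ℝ) ^ n) else 0 := by
  rw [DW_two_pow_prod]
  by_cases h : ∀ k < n, x k = 0
  · rw [if_pos h]
    have : ∀ j ∈ Finset.range n, (1 + rad j x) = 2 := by
      intro j hj
      rw [rad_zero_coord (h j (Finset.mem_range.mp hj))]
      norm_num
    rw [Finset.prod_congr rfl this, Finset.prod_const, Finset.card_range]
  · rw [if_neg h]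
    push_neg at h
    obtain ⟨k, hk, hk0⟩ := h
    have hk1 : x k = 1 := by
      rcases zmod2_cases (x k) 0 with h' | h'
      · exact absurd h' hk0
      · simpa using h'
    apply Finset.prod_eq_zero (Finset.mem_range.mpr hk)
    rw [rad_one_coord hk1]
    ring

lemma DW_two_pow_nonneg (n : ℕ) (x : G) : 0 ≤ DW (2 ^ n) x := by
  rw [DW_two_pow_eval]
  split <;> positivity

lemma fm_as_sum (m : ℕ) (x : G) :
    fm m x = ∑ k ∈ Finset.Ico (2 ^ (2 * m)) (2 ^ (2 * m + 1)), walsh k x := by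
  unfold fm DW
  rw [Finset.sum_Ico_eq_sub _ (Nat.pow_le_pow_right (by norm_num) (Nat.le_succ _))]

lemma fm_eq (m : ℕ) (x : G) : fm m x = rad (2 * m) x * DW (2 ^ (2 * m)) x := by
  unfold fm
  rw [DW_two_pow_succ]
  ring

lemma abs_fm (m : ℕ) (x : G) : |fm m x| = DW (2 ^ (2 * m)) x := by
  rw [fm_eq, abs_mul, rad_abs, one_mul, abs_of_nonneg (DW_two_pow_nonneg _ x)]

lemma coefW_fm (m i : ℕ) :
    coefW (fm m) i = if i ∈ Finset.Ico (2 ^ (2 * m)) (2 ^ (2 * m + 1)) then 1 else 0 := by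
  unfold coefW
  have hrep : (fun x => fm m x * walsh i x)
      = fun x => ∑ k ∈ Finset.Ico (2 ^ (2 * m)) (2 ^ (2 * m + 1)), walsh k x * walsh i x := by
    funext x
    rw [fm_as_sum, Finset.sum_mul]
  rw [hrep, integral_finset_sum]
  · have : ∀ k ∈ Finset.Ico (2 ^ (2 * m)) (2 ^ (2 * m + 1)),
        ∫ x, walsh k x * walsh i x ∂μ = if k = i then 1 else 0 :=
      fun k _ => integral_walsh_mul k i
    rw [Finset.sum_congr rfl this, Finset.sum_ite_eq' _ i (fun _ => (1 : ℝ))]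
  · intro k _
    rw [show (fun x => walsh k x * walsh i x) = walsh (k ^^^ i) from funext fun x => walsh_mul x]
    exact integrable_walsh _

lemma SW_fm_two_pow (m j : ℕ) (x : G) :
    SW (fm m) (2 ^ j) x = if 2 * m + 1 ≤ j then fm m x else 0 := by
  unfold SW
  have hrw : ∀ i ∈ Finset.range (2 ^ j), coefW (fm m) i * walsh i x
      = if i ∈ Finset.Ico (2 ^ (2 * m)) (2 ^ (2 * m + 1)) then walsh i x else 0 := by
    intro i _
    rw [coefW_fm]
    split <;> simp
  rw [Finset.sum_congr rfl hrw, Finset.sum_ite_mem]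
  by_cases hj : 2 * m + 1 ≤ j
  · rw [if_pos hj]
    have hsub : Finset.range (2 ^ j) ∩ Finset.Ico (2 ^ (2 * m)) (2 ^ (2 * m + 1))
        = Finset.Ico (2 ^ (2 * m)) (2 ^ (2 * m + 1)) := by
      apply Finset.ext
      intro a
      simp only [Finset.mem_inter, Finset.mem_range, Finset.mem_Ico]
      have : 2 ^ (2 * m + 1) ≤ 2 ^ j := Nat.pow_le_pow_right (by norm_num) hj
      omega
    rw [hsub, ← fm_as_sum]
  · rw [if_neg hj]
    have hsub : Finset.range (2 ^ j) ∩ Finset.Ico (2 ^ (2 * m)) (2 ^ (2 * m + 1))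
        = ∅ := by
      apply Finset.ext
      intro a
      simp only [Finset.mem_inter, Finset.mem_range, Finset.mem_Ico, Finset.notMem_empty,
        iff_false]
      have : 2 ^ j ≤ 2 ^ (2 * m) := Nat.pow_le_pow_right (by norm_num) (by omega)
      omega
    rw [hsub, Finset.sum_empty]

lemma fstar_fm (m : ℕ) (x : G) :
    fstar (fm m) x = ENNReal.ofReal (DW (2 ^ (2 * m)) x) := by
  unfold fstar
  apply le_antisymm
  · apply iSup_le
    intro n
    rw [SW_fm_two_pow]
    split
    · rw [abs_fm]
    · simp
  · have h := le_iSup (fun n => ENNReal.ofReal |SW (fm m) (2 ^ n) x|) (2 * m + 1)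
    rw [SW_fm_two_pow, if_pos (le_refl _), abs_fm] at h
    exact h

lemma In_eq (n : ℕ) : In n = {x : G | ∀ k ∈ Finset.range n, x k = (0 : G) k} := by
  unfold In cyl
  ext x
  simp

lemma In_measurable (n : ℕ) : MeasurableSet (In n) := by
  rw [In_eq]; exact measSet _ _

lemma In_measure (n : ℕ) : μ (In n) = 2⁻¹ ^ n := by
  rw [In_eq, measCyl, Finset.card_range]

lemma lintegral_fstar_fm {p : ℝ} (hp0 : 0 < p) (m : ℕ) :
    ∫⁻ x, fstar (fm m) x ^ p ∂μ
      = ENNReal.ofReal ((2 : ℝ) ^ (2 * m)) ^ p * 2⁻¹ ^ (2 * m) := by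
  have hrep : (fun x => fstar (fm m) x ^ p)
      = (In (2 * m)).indicator (fun _ => ENNReal.ofReal ((2 : ℝ) ^ (2 * m)) ^ p) := by
    funext x
    rw [fstar_fm, DW_two_pow_eval]
    by_cases h : ∀ k < 2 * m, x k = 0
    · rw [if_pos h, Set.indicator_of_mem]
      exact fun k hk => h k hk
    · rw [if_neg h, Set.indicator_of_notMem]
      · simp [ENNReal.zero_rpow_of_pos hp0]
      · exact fun hx => h fun k hk => hx k hk
  rw [lintegral_congr (fun x => congrFun hrep x),
    lintegral_indicator (In_measurable _) _, setLIntegral_const, In_measure]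

end DirichletFm

section Kacz

lemma testBit_sum (L : ℕ) (b : ℕ → Bool) (t : ℕ) :
    (∑ j ∈ Finset.range L, (b j).toNat * 2 ^ j).testBit t
      = if t < L then b t else false := by
  induction L generalizing b t with
  | zero => simp [Nat.zero_testBit]
  | succ L IH =>
      rw [Finset.sum_range_succ']
      have hfac : ∀ j, (b (j + 1)).toNat * 2 ^ (j + 1) = 2 * ((b (j + 1)).toNat * 2 ^ j) := by
        intro j; rw [pow_succ]; ring
      rw [Finset.sum_congr rfl fun j _ => hfac j, ← Finset.mul_sum]
      set T := ∑ j ∈ Finset.range L, (b (j + 1)).toNat * 2 ^ j with hT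
      have hb0 : (b 0).toNat * 2 ^ 0 = (b 0).toNat := by simp
      rw [hb0]
      cases t with
      | zero =>
          rw [Nat.testBit_zero]
          have : (2 * T + (b 0).toNat) % 2 = (b 0).toNat % 2 := Nat.mul_add_mod 2 T _
          rw [this]
          cases hb : b 0 <;> simp
      | succ t =>
          rw [Nat.testBit_succ]
          have hdiv : (2 * T + (b 0).toNat) / 2 = T := by
            rw [Nat.mul_add_div (by norm_num)]
            cases hb : b 0 <;> simp
          rw [hdiv, IH (fun j => b (j + 1)) t]
          simp [Nat.succ_lt_succ_iff]

lemma sum_testBit {L n : ℕ} (h : n < 2 ^ L) :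
    ∑ j ∈ Finset.range L, (n.testBit j).toNat * 2 ^ j = n := by
  induction L generalizing n with
  | zero => simp at h; simp [h]
  | succ L IH =>
      rw [Finset.sum_range_succ']
      have hfac : ∀ j, (n.testBit (j + 1)).toNat * 2 ^ (j + 1)
          = 2 * (((n / 2).testBit j).toNat * 2 ^ j) := by
        intro j; rw [Nat.testBit_succ, pow_succ]; ring
      rw [Finset.sum_congr rfl fun j _ => hfac j, ← Finset.mul_sum]
      have hn2 : n / 2 < 2 ^ L := by
        rw [pow_succ] at h
        omega
      rw [IH hn2]
      have : (n.testBit 0).toNat = n % 2 := by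
        rw [Nat.testBit_zero]
        rcases Nat.mod_two_eq_zero_or_one n with h' | h' <;> rw [h'] <;> simp
      rw [pow_zero, mul_one, this]
      omega

lemma sum_two_pow (L : ℕ) : ∑ j ∈ Finset.range L, 2 ^ j = 2 ^ L - 1 := by
  induction L with
  | zero => simp
  | succ L IH =>
      rw [Finset.sum_range_succ, IH, pow_succ]
      have := Nat.one_le_two_pow (n := L)
      omega

def rev (L n : ℕ) : ℕ := ∑ j ∈ Finset.range L, (n.testBit (L - 1 - j)).toNat * 2 ^ j

lemma rev_lt (L n : ℕ) : rev L n < 2 ^ L := by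
  have h1 : rev L n ≤ ∑ j ∈ Finset.range L, 2 ^ j := by
    apply Finset.sum_le_sum
    intro j _
    have : ((n.testBit (L - 1 - j)).toNat) ≤ 1 := Bool.toNat_le _
    calc (n.testBit (L - 1 - j)).toNat * 2 ^ j ≤ 1 * 2 ^ j :=
          Nat.mul_le_mul_right _ this
      _ = 2 ^ j := one_mul _
  rw [sum_two_pow] at h1
  have := Nat.one_le_two_pow (n := L)
  omega

lemma rev_testBit (L n t : ℕ) (ht : t < L) :
    (rev L n).testBit t = n.testBit (L - 1 - t) := by
  rw [rev, testBit_sum, if_pos ht]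

lemma kacz_eq_walsh {n : ℕ} (hn : n ≠ 0) (x : G) :
    kacz n x = walsh (2 ^ lg n + rev (lg n) n) x := by
  unfold kacz
  rw [if_neg hn, walsh_two_pow_add x (rev_lt _ _)]
  congr 1
  rw [walsh_eq x (rev_lt (lg n) n),
    ← Finset.prod_range_reflect (fun k => rad k x ^ ((rev (lg n) n).testBit k).toNat) (lg n)]
  apply Finset.prod_congr rfl
  intro j hj
  rw [Finset.mem_range] at hj
  rw [rev_testBit (lg n) n _ (by omega)]
  have heq : lg n - 1 - (lg n - 1 - j) = j := by omega
  rw [heq]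

lemma mem_Ico_iff_lg {L i : ℕ} (hi : i ≠ 0) :
    i ∈ Finset.Ico (2 ^ L) (2 ^ (L + 1)) ↔ lg i = L := by
  rw [Finset.mem_Ico]
  constructor
  · rintro ⟨h1, h2⟩
    exact Nat.log_eq_of_pow_le_of_lt_pow h1 h2
  · rintro rfl
    exact ⟨Nat.pow_log_le_self 2 hi, Nat.lt_pow_succ_log_self (by norm_num) i⟩

lemma nu_mem_Ico {L i : ℕ} (hi : i ≠ 0) :
    2 ^ lg i + rev (lg i) i ∈ Finset.Ico (2 ^ L) (2 ^ (L + 1)) ↔ lg i = L := by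
  have h1 : 2 ^ lg i ≤ 2 ^ lg i + rev (lg i) i := Nat.le_add_right _ _
  have h2 : 2 ^ lg i + rev (lg i) i < 2 ^ (lg i + 1) := by
    have := rev_lt (lg i) i
    rw [pow_succ]
    omega
  have hν : (2 : ℕ) ^ lg i + rev (lg i) i ≠ 0 := by
    have := Nat.one_le_two_pow (n := lg i)
    omega
  rw [mem_Ico_iff_lg hν,
    show lg (2 ^ lg i + rev (lg i) i) = lg i from Nat.log_eq_of_pow_le_of_lt_pow h1 h2]

lemma coefK_fm (m i : ℕ) :
    coefK (fm m) i = if i ∈ Finset.Ico (2 ^ (2 * m)) (2 ^ (2 * m + 1)) then 1 else 0 := by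
  by_cases h0 : i = 0
  · subst h0
    have hk0 : ∀ x : G, kacz 0 x = 1 := by intro x; unfold kacz; simp
    unfold coefK
    have : (fun x => fm m x * kacz 0 x)
        = fun x => ∑ k ∈ Finset.Ico (2 ^ (2 * m)) (2 ^ (2 * m + 1)), walsh k x := by
      funext x
      rw [hk0, mul_one, fm_as_sum]
    rw [this, integral_finset_sum _ (fun k _ => integrable_walsh k)]
    have hz : ∀ k ∈ Finset.Ico (2 ^ (2 * m)) (2 ^ (2 * m + 1)),
        ∫ x, walsh k x ∂μ = 0 := by
      intro k hk
      rw [Finset.mem_Ico] at hk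
      have : k ≠ 0 := by
        have := Nat.one_le_two_pow (n := 2 * m)
        omega
      rw [integral_walsh, if_neg this]
    rw [Finset.sum_congr rfl hz, Finset.sum_const, smul_zero]
    have : (0 : ℕ) ∉ Finset.Ico (2 ^ (2 * m)) (2 ^ (2 * m + 1)) := by
      rw [Finset.mem_Ico]
      have := Nat.one_le_two_pow (n := 2 * m)
      omega
    rw [if_neg this]
  · unfold coefK
    have : (fun x => fm m x * kacz i x)
        = fun x => fm m x * walsh (2 ^ lg i + rev (lg i) i) x := by
      funext x
      rw [kacz_eq_walsh h0]
    rw [this]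
    show coefW (fm m) (2 ^ lg i + rev (lg i) i) = _
    rw [coefW_fm]
    apply if_congr _ rfl rfl
    rw [nu_mem_Ico h0, ← mem_Ico_iff_lg h0]

end Kacz

section Sigma

lemma pow24 (m : ℕ) : (2 : ℕ) ^ (2 * m) = 4 ^ m := by
  rw [pow_mul]; norm_num

lemma qA_succ (m : ℕ) : qA (m + 1) = qA m + 4 ^ (m + 1) := Finset.sum_range_succ _ _

lemma qA_zero : qA 0 = 1 := by simp [qA]

lemma qA_lower (m : ℕ) : 4 ^ m ≤ qA m := by
  unfold qA
  exact Finset.single_le_sum (f := fun i => 4 ^ i) (fun i _ => Nat.zero_le _)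
    (Finset.self_mem_range_succ m)

lemma qA_upper (m : ℕ) : qA m < 2 * 4 ^ m := by
  induction m with
  | zero => simp [qA_zero]
  | succ m IH =>
      rw [qA_succ]
      have : (4 : ℕ) ^ (m + 1) = 4 * 4 ^ m := by rw [pow_succ]; ring
      omega

lemma qA_pos (m : ℕ) : 0 < qA m := lt_of_lt_of_le (Nat.pow_pos (by norm_num)) (qA_lower m)

lemma double_sum (n : ℕ) (g : ℕ → ℝ) :
    ∑ j ∈ Finset.range n, ∑ i ∈ Finset.range j, g i
      = ∑ i ∈ Finset.range n, ((n - 1 - i : ℕ) : ℝ) * g i := by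
  induction n with
  | zero => simp
  | succ n IH =>
      rw [Finset.sum_range_succ, IH, ← Finset.sum_add_distrib, Finset.sum_range_succ
        (fun i => ((n + 1 - 1 - i : ℕ) : ℝ) * g i)]
      have hlast : ((n + 1 - 1 - n : ℕ) : ℝ) * g n = 0 := by
        have : n + 1 - 1 - n = 0 := by omega
        rw [this]
        simp
      rw [hlast, add_zero]
      apply Finset.sum_congr rfl
      intro i hi
      rw [Finset.mem_range] at hi
      have h1 : n + 1 - 1 - i = (n - 1 - i) + 1 := by omega
      rw [h1]
      push_cast
      ring

lemma kacz_shift {m r : ℕ} (hr : r < 2 ^ (2 * m)) (x : G) :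
    kacz (2 ^ (2 * m) + r) x = rad (2 * m) x * walsh r (tau (2 * m) x) := by
  have hne : 2 ^ (2 * m) + r ≠ 0 := by positivity
  have hlg : lg (2 ^ (2 * m) + r) = 2 * m := by
    apply Nat.log_eq_of_pow_le_of_lt_pow (Nat.le_add_right _ _)
    rw [pow_succ]
    omega
  unfold kacz
  rw [if_neg hne, hlg, walsh_eq _ hr]
  congr 1
  apply Finset.prod_congr rfl
  intro k hk
  rw [Finset.mem_range] at hk
  rw [Nat.testBit_two_pow_add_gt hk]
  congr 1
  unfold rad tau
  rw [if_pos hk]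

lemma sigma_formula (m : ℕ) (x : G) :
    sigmaK (fm m) (qA m) x
      = rad (2 * m) x
          * (∑ j ∈ Finset.range (qA m - 4 ^ m), DW j (tau (2 * m) x)) / (qA m : ℝ) := by
  unfold sigmaK
  congr 1
  set y := tau (2 * m) x with hy
  set q := qA m with hq
  have haq : 2 ^ (2 * m) ≤ q := by rw [pow24]; exact qA_lower m
  have hqb : q < 2 ^ (2 * m + 1) := by
    rw [pow_succ, pow24]
    have := qA_upper m
    omega
  have hSK : ∀ j ∈ Finset.range q, SK (fm m) j x
      = ∑ i ∈ Finset.range j,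
          (if i ∈ Finset.Ico (2 ^ (2 * m)) (2 ^ (2 * m + 1)) then kacz i x else 0) := by
    intro j _
    unfold SK
    refine Finset.sum_congr rfl fun i _ => ?_
    rw [coefK_fm]
    split <;> simp
  rw [Finset.sum_congr rfl hSK, double_sum]
  have hite : ∀ i ∈ Finset.range q,
      ((q - 1 - i : ℕ) : ℝ)
          * (if i ∈ Finset.Ico (2 ^ (2 * m)) (2 ^ (2 * m + 1)) then kacz i x else 0)
        = if i ∈ Finset.Ico (2 ^ (2 * m)) q then ((q - 1 - i : ℕ) : ℝ) * kacz i x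
          else 0 := by
    intro i hi
    rw [Finset.mem_range] at hi
    by_cases hmem : i ∈ Finset.Ico (2 ^ (2 * m)) (2 ^ (2 * m + 1))
    · rw [if_pos hmem, if_pos (Finset.mem_Ico.mpr ⟨(Finset.mem_Ico.mp hmem).1, hi⟩)]
    · rw [if_neg hmem, if_neg, mul_zero]
      rw [Finset.mem_Ico] at hmem ⊢
      omega
  rw [Finset.sum_congr rfl hite, Finset.sum_ite_mem]
  have hinter : Finset.range q ∩ Finset.Ico (2 ^ (2 * m)) q
      = Finset.Ico (2 ^ (2 * m)) q := by
    apply Finset.ext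
    intro b
    simp only [Finset.mem_inter, Finset.mem_range, Finset.mem_Ico]
    omega
  rw [hinter, Finset.sum_Ico_eq_sum_range]
  have hQa : q - 4 ^ m = q - 2 ^ (2 * m) := by rw [pow24]
  rw [hQa]
  set Q := q - 2 ^ (2 * m) with hQ
  have hterm : ∀ r ∈ Finset.range Q,
      ((q - 1 - (2 ^ (2 * m) + r) : ℕ) : ℝ) * kacz (2 ^ (2 * m) + r) x
        = rad (2 * m) x * (((Q - 1 - r : ℕ) : ℝ) * walsh r y) := by
    intro r hr
    rw [Finset.mem_range] at hr
    have hrlt : r < 2 ^ (2 * m) := by omega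
    rw [kacz_shift hrlt x]
    have hco : q - 1 - (2 ^ (2 * m) + r) = Q - 1 - r := by omega
    rw [hco, hy]
    ring
  rw [Finset.sum_congr rfl hterm, ← Finset.mul_sum]
  congr 1
  rw [← double_sum Q (fun i => walsh i y)]
  rfl

end Sigma

section Kernel

def FF (n : ℕ) (y : G) : ℝ := ∑ j ∈ Finset.range n, DW j y

lemma DW_shift {A s : ℕ} (hs : s ≤ 2 ^ A) (y : G) :
    DW (2 ^ A + s) y = DW (2 ^ A) y + rad A y * DW s y := by
  rw [DW_add]
  have : ∀ t ∈ Finset.range s, walsh (2 ^ A + t) y = rad A y * walsh t y := by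
    intro t ht
    exact walsh_two_pow_add y (lt_of_lt_of_le (Finset.mem_range.mp ht) hs)
  rw [Finset.sum_congr rfl this, ← Finset.mul_sum]
  rfl

lemma FF_shift {A s : ℕ} (hs : s ≤ 2 ^ A) (y : G) :
    FF (2 ^ A + s) y = FF (2 ^ A) y + (s : ℝ) * DW (2 ^ A) y + rad A y * FF s y := by
  unfold FF
  rw [Finset.sum_range_add]
  have : ∀ t ∈ Finset.range s, DW (2 ^ A + t) y
      = DW (2 ^ A) y + rad A y * DW t y := by
    intro t ht
    exact DW_shift (le_of_lt (lt_of_lt_of_le (Finset.mem_range.mp ht) hs)) y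
  rw [Finset.sum_congr rfl this, Finset.sum_add_distrib, Finset.sum_const, ← Finset.mul_sum]
  rw [Finset.card_range, nsmul_eq_mul]
  ring

variable {y : G} (hy0 : y 0 = 0) (hy1 : y 1 = 1) (hy2 : y 2 = 0) (hy3 : y 3 = 1)

include hy1 in
lemma DW_H {n : ℕ} (hn : 2 ≤ n) : DW (2 ^ n) y = 0 := by
  rw [DW_two_pow_eval, if_neg]
  intro h
  have := h 1 (by omega)
  rw [hy1] at this
  exact one_ne_zero this

include hy0 hy1 in
lemma FF4_H : FF 4 y = 4 := by
  have w0 : walsh 0 y = 1 := walsh_zero y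
  have w1 : walsh 1 y = 1 := by
    rw [walsh_eq y (show 1 < 2 ^ 1 by norm_num), Finset.prod_range_one]
    rw [show Nat.testBit 1 0 = true from rfl, rad_zero_coord hy0]
    simp
  have w2 : walsh 2 y = -1 := by
    rw [walsh_eq y (show 2 < 2 ^ 2 by norm_num), Finset.prod_range_succ,
      Finset.prod_range_one]
    rw [show Nat.testBit 2 0 = false from rfl, show Nat.testBit 2 1 = true from rfl,
      rad_one_coord hy1]
    simp
  have d0 : DW 0 y = 0 := by simp [DW]
  have d1 : DW 1 y = 1 := DW_one y
  have d2 : DW 2 y = 2 := by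
    unfold DW
    rw [Finset.sum_range_succ, Finset.sum_range_one, w0, w1]
    norm_num
  have d3 : DW 3 y = 1 := by
    unfold DW
    rw [Finset.sum_range_succ, Finset.sum_range_succ, Finset.sum_range_one, w0, w1, w2]
    norm_num
  unfold FF
  rw [show (4 : ℕ) = 3 + 1 by rfl, Finset.sum_range_succ, Finset.sum_range_succ,
    Finset.sum_range_succ, Finset.sum_range_one, d0, d1, d2, d3]
  norm_num

lemma FF0 : FF 0 y = 0 := by simp [FF]

lemma FF1 : FF 1 y = 0 := by simp [FF, DW]

include hy1 hy3 in
lemma FF_two_pow_H {n : ℕ} (hn : 4 ≤ n) : FF (2 ^ n) y = 0 := by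
  induction n with
  | zero => omega
  | succ n IH =>
      by_cases h4 : 4 ≤ n
      · have h1 : (2 : ℕ) ^ (n + 1) = 2 ^ n + 2 ^ n := by rw [pow_succ]; ring
        rw [h1, FF_shift (le_refl _), IH h4, DW_H hy1 (by omega)]
        simp
      · have hn4 : n = 3 := by omega
        subst hn4
        have h1 : (2 : ℕ) ^ 4 = 2 ^ 3 + 2 ^ 3 := by norm_num
        rw [h1, FF_shift (le_refl _), DW_H hy1 (by omega), rad_one_coord hy3]
        ring

include hy0 hy1 hy2 hy3 in
lemma FF_qA_H {M : ℕ} (hM : 1 ≤ M) : FF (qA M) y = 4 ∨ FF (qA M) y = -4 := by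
  induction M with
  | zero => omega
  | succ M IH =>
      by_cases hM1 : 1 ≤ M
      · have hq : qA (M + 1) = 2 ^ (2 * (M + 1)) + qA M := by
          rw [qA_succ, pow24]
          ring
        have hle : qA M ≤ 2 ^ (2 * (M + 1)) := by
          rw [pow24]
          have h1 := qA_upper M
          have h2 : (4 : ℕ) ^ (M + 1) = 4 * 4 ^ M := by rw [pow_succ]; ring
          omega
        rw [hq, FF_shift hle, FF_two_pow_H hy1 hy3 (by omega), DW_H hy1 (by omega)]
        rcases IH hM1 with h | h <;> rcases rad_sq_cases (2 * (M + 1)) y with hr | hr <;>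
          rw [h, hr] <;> [left; right; right; left] <;> ring
      · have hM0 : M = 0 := by omega
        subst hM0
        have hq : qA 1 = 2 ^ 2 + 1 := by rw [qA_succ, qA_zero]; norm_num
        rw [hq, FF_shift (by norm_num), FF1, DW_H hy1 (by omega),
          show (2:ℕ)^2 = 4 from rfl, FF4_H hy0 hy1]
        left
        norm_num

end Kernel

section SigmaE

lemma qA_sub (m : ℕ) (hm : 1 ≤ m) : qA m - 4 ^ m = qA (m - 1) := by
  have h := qA_succ (m - 1)
  rw [show m - 1 + 1 = m by omega] at h
  omega

lemma sigma_on_E (m : ℕ) (hm : 2 ≤ m) (x : G)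
    (h1 : x (2 * m - 1) = 0) (h2 : x (2 * m - 2) = 1)
    (h3 : x (2 * m - 3) = 0) (h4 : x (2 * m - 4) = 1) :
    |sigmaK (fm m) (qA m) x| = 4 / (qA m : ℝ) := by
  set y := tau (2 * m) x with hy
  have hy0 : y 0 = 0 := by
    rw [hy]
    show (if 0 < 2 * m then x (2 * m - 1 - 0) else x 0) = 0
    rw [if_pos (by omega)]
    simpa using h1
  have hy1 : y 1 = 1 := by
    rw [hy]
    show (if 1 < 2 * m then x (2 * m - 1 - 1) else x 1) = 1
    rw [if_pos (by omega), show 2 * m - 1 - 1 = 2 * m - 2 by omega]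
    exact h2
  have hy2 : y 2 = 0 := by
    rw [hy]
    show (if 2 < 2 * m then x (2 * m - 1 - 2) else x 2) = 0
    rw [if_pos (by omega), show 2 * m - 1 - 2 = 2 * m - 3 by omega]
    exact h3
  have hy3 : y 3 = 1 := by
    rw [hy]
    show (if 3 < 2 * m then x (2 * m - 1 - 3) else x 3) = 1
    rw [if_pos (by omega), show 2 * m - 1 - 3 = 2 * m - 4 by omega]
    exact h4
  rw [sigma_formula m x]
  have hsum : (∑ j ∈ Finset.range (qA m - 4 ^ m), DW j (tau (2 * m) x))
      = FF (qA (m - 1)) y := by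
    rw [qA_sub m (by omega)]
    rfl
  rw [hsum]
  have hFF : FF (qA (m - 1)) y = 4 ∨ FF (qA (m - 1)) y = -4 :=
    FF_qA_H hy0 hy1 hy2 hy3 (by omega)
  have hqpos : (0 : ℝ) < (qA m : ℝ) := by exact_mod_cast qA_pos m
  rw [abs_div, abs_mul, rad_abs, one_mul, abs_of_pos hqpos]
  rcases hFF with h | h <;> rw [h] <;> norm_num

end SigmaE

section NumDen

lemma half_pow_ofReal (n : ℕ) : ((2 : ℝ≥0∞))⁻¹ ^ n = ENNReal.ofReal (((2 : ℝ))⁻¹ ^ n) := by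
  rw [ENNReal.ofReal_pow (by norm_num)]
  congr 1
  rw [ENNReal.ofReal_inv_of_pos (by norm_num)]
  norm_num

lemma den_eq {p : ℝ} (hp0 : 0 < p) (m : ℕ) :
    (∫⁻ x, fstar (fm m) x ^ p ∂μ) ^ (1 / p)
      = ENNReal.ofReal ((2 : ℝ) ^ (2 * m) * (((2 : ℝ))⁻¹ ^ (2 * m)) ^ (1 / p)) := by
  rw [lintegral_fstar_fm hp0 m, half_pow_ofReal,
    ENNReal.mul_rpow_of_nonneg _ _ (by positivity),
    ← ENNReal.rpow_mul, mul_one_div_cancel hp0.ne', ENNReal.rpow_one,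
    ENNReal.ofReal_rpow_of_pos (by positivity),
    ← ENNReal.ofReal_mul (by positivity)]

def Em (m : ℕ) : Set G :=
  {x : G | x (2 * m - 1) = 0 ∧ x (2 * m - 2) = 1 ∧ x (2 * m - 3) = 0 ∧ x (2 * m - 4) = 1}

lemma Em_measure (m : ℕ) (hm : 2 ≤ m) : μ (Em m) = 2⁻¹ ^ 4 := by
  classical
  set z : G := fun k => if k = 2 * m - 2 then 1 else if k = 2 * m - 4 then 1 else 0 with hz
  set S : Finset ℕ := {2 * m - 1, 2 * m - 2, 2 * m - 3, 2 * m - 4} with hS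
  have hz1 : z (2 * m - 1) = 0 := by
    show (if 2 * m - 1 = 2 * m - 2 then (1 : ZMod 2) else
      if 2 * m - 1 = 2 * m - 4 then 1 else 0) = 0
    rw [if_neg (by omega), if_neg (by omega)]
  have hz2 : z (2 * m - 2) = 1 := by
    show (if 2 * m - 2 = 2 * m - 2 then (1 : ZMod 2) else
      if 2 * m - 2 = 2 * m - 4 then 1 else 0) = 1
    rw [if_pos rfl]
  have hz3 : z (2 * m - 3) = 0 := by
    show (if 2 * m - 3 = 2 * m - 2 then (1 : ZMod 2) else
      if 2 * m - 3 = 2 * m - 4 then 1 else 0) = 0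
    rw [if_neg (by omega), if_neg (by omega)]
  have hz4 : z (2 * m - 4) = 1 := by
    show (if 2 * m - 4 = 2 * m - 2 then (1 : ZMod 2) else
      if 2 * m - 4 = 2 * m - 4 then 1 else 0) = 1
    rw [if_neg (by omega), if_pos rfl]
  have hES : Em m = {x : G | ∀ k ∈ S, x k = z k} := by
    ext x
    simp only [Em, Set.mem_setOf_eq, hS, Finset.mem_insert, Finset.mem_singleton]
    constructor
    · rintro ⟨a1, a2, a3, a4⟩ k hk
      rcases hk with rfl | rfl | rfl | rfl
      · rw [hz1]; exact a1
      · rw [hz2]; exact a2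
      · rw [hz3]; exact a3
      · rw [hz4]; exact a4
    · intro h
      refine ⟨?_, ?_, ?_, ?_⟩
      · have := h (2 * m - 1) (by tauto)
        rwa [hz1] at this
      · have := h (2 * m - 2) (by tauto)
        rwa [hz2] at this
      · have := h (2 * m - 3) (by tauto)
        rwa [hz3] at this
      · have := h (2 * m - 4) (by tauto)
        rwa [hz4] at this
  have hcard : S.card = 4 := by
    rw [hS]
    rw [Finset.card_insert_of_notMem (by simp; omega),
      Finset.card_insert_of_notMem (by simp; omega),
      Finset.card_insert_of_notMem (by simp; omega),
      Finset.card_singleton]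
  rw [hES, measCyl, hcard]

lemma num_ge {p : ℝ} (hp0 : 0 < p) (φ : ℕ → ℝ) (m : ℕ) (hm : 2 ≤ m)
    (hφq : 0 < φ (qA m)) :
    ENNReal.ofReal ((2 / ((qA m : ℝ) * φ (qA m))) * (((2 : ℝ))⁻¹ ^ 4) ^ (1 / p))
      ≤ wnorm (fun x => sigmaK (fm m) (qA m) x / φ (qA m)) p := by
  have hqpos : (0 : ℝ) < (qA m : ℝ) := by exact_mod_cast qA_pos m
  set l : ℝ := 2 / ((qA m : ℝ) * φ (qA m)) with hl
  have hlpos : 0 < l := by positivity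
  have hsub : Em m ⊆ {x : G | l < |sigmaK (fm m) (qA m) x / φ (qA m)|} := by
    rintro x ⟨a1, a2, a3, a4⟩
    show l < _
    rw [abs_div, sigma_on_E m hm x a1 a2 a3 a4, abs_of_pos hφq, div_div]
    have h4 : 4 / ((qA m : ℝ) * φ (qA m)) = 2 * l := by
      rw [hl]; ring
    rw [h4]
    exact lt_two_mul_self hlpos
  have step1 : ENNReal.ofReal ((2 / ((qA m : ℝ) * φ (qA m))) * (((2 : ℝ))⁻¹ ^ 4) ^ (1 / p))
      ≤ ENNReal.ofReal l * μ {x : G | l < |sigmaK (fm m) (qA m) x / φ (qA m)|} ^ (1 / p) := by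
    rw [ENNReal.ofReal_mul (le_of_lt hlpos)]
    apply mul_le_mul_right
    have hE : ENNReal.ofReal ((((2 : ℝ))⁻¹ ^ 4) ^ (1 / p)) = μ (Em m) ^ (1 / p) := by
      rw [Em_measure m hm, half_pow_ofReal, ENNReal.ofReal_rpow_of_pos (by positivity)]
    rw [hE]
    exact ENNReal.rpow_le_rpow (measure_mono hsub) (by positivity)
  refine le_trans step1 ?_
  unfold wnorm
  refine le_trans ?_ (le_iSup _ l)
  rw [iSup_pos hlpos]

end NumDen

section Endgame

lemma two_lt_inv_p {p : ℝ} (hp0 : 0 < p) (hp : p < 1 / 2) : 2 < 1 / p := by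
  rw [lt_div_iff₀ hp0]
  linarith

lemma AvalBval {p : ℝ} (hp0 : 0 < p) (hp : p < 1 / 2) (m : ℕ) (φq : ℝ) (hφq : 0 < φq) :
    2 * ((2 : ℝ)⁻¹ ^ 4) ^ (1 / p) / (4 : ℝ) ^ (1 / p - 1) * (qA m : ℝ) ^ (1 / p - 2) / φq
      ≤ (2 / ((qA m : ℝ) * φq) * (((2 : ℝ))⁻¹ ^ 4) ^ (1 / p))
          / ((2 : ℝ) ^ (2 * m) * (((2 : ℝ))⁻¹ ^ (2 * m)) ^ (1 / p)) := by
  have h2p : 2 < 1 / p := two_lt_inv_p hp0 hp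
  set c1 : ℝ := ((2 : ℝ)⁻¹ ^ 4) ^ (1 / p) with hc1
  have hc1pos : 0 < c1 := Real.rpow_pos_of_pos (by positivity) _
  have hqpos : (0 : ℝ) < (qA m : ℝ) := by exact_mod_cast qA_pos m
  set q : ℝ := (qA m : ℝ) with hqdef
  set t : ℝ := (4 : ℝ) ^ m with htdef
  have htpos : 0 < t := by positivity
  have hq4t : q ≤ 4 * t := by
    have h := qA_upper m
    have : (qA m : ℝ) ≤ 2 * (4 : ℝ) ^ m := by exact_mod_cast h.le
    rw [hqdef, htdef]
    nlinarith [htpos]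
  have hB : (2 : ℝ) ^ (2 * m) * (((2 : ℝ))⁻¹ ^ (2 * m)) ^ (1 / p) = t * (t ^ (1 / p))⁻¹ := by
    have e1 : (2 : ℝ) ^ (2 * m) = t := by
      rw [htdef, pow_mul]
      norm_num
    have e2 : ((2 : ℝ))⁻¹ ^ (2 * m) = t⁻¹ := by
      rw [htdef, pow_mul, ← inv_pow]
      try norm_num
    rw [e1, e2, Real.inv_rpow htpos.le]
  rw [hB]
  have htp : (0 : ℝ) < t ^ (1 / p) := Real.rpow_pos_of_pos htpos _
  have hrhs : 2 / (q * φq) * c1 / (t * (t ^ (1 / p))⁻¹)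
      = 2 * c1 / (q * φq) * t ^ (1 / p - 1) := by
    rw [Real.rpow_sub htpos, Real.rpow_one]
    field_simp
    try ring
  rw [hrhs]
  have hE1 : 2 * c1 / (4 : ℝ) ^ (1 / p - 1) * q ^ (1 / p - 2) / φq
      = 2 * c1 / (q * φq) * ((q / 4) ^ (1 / p - 1)) := by
    have h4pos : (0 : ℝ) < (4 : ℝ) ^ (1 / p - 1) := Real.rpow_pos_of_pos (by norm_num) _
    rw [Real.div_rpow hqpos.le (by norm_num : (0 : ℝ) ≤ 4),
      show 1 / p - 2 = 1 / p - 1 - 1 by ring, Real.rpow_sub hqpos, Real.rpow_one]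
    field_simp
  rw [hE1]
  apply mul_le_mul_of_nonneg_left _ (by positivity)
  apply Real.rpow_le_rpow (by positivity) (by linarith) (by linarith)

lemma qA_two : qA 2 = 21 := by
  simp [qA, Finset.sum_range_succ]

lemma choose_m {p : ℝ} (hp0 : 0 < p) (hp : p < 1 / 2)
    (φ : ℕ → ℝ) (hφ1 : ∀ n : ℕ, 1 ≤ n → 1 ≤ φ n)
    (hφmono : ∀ m n : ℕ, 1 ≤ m → m ≤ n → φ m ≤ φ n)
    (hφlimsup : ∀ C : ℝ, ∃ᶠ n : ℕ in Filter.atTop, C < (n : ℝ) ^ (1 / p - 2) / φ n)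
    (K : ℝ) :
    ∃ m : ℕ, 2 ≤ m ∧
      K < 2 * ((2 : ℝ)⁻¹ ^ 4) ^ (1 / p) / (4 : ℝ) ^ (1 / p - 1)
            * (qA m : ℝ) ^ (1 / p - 2) / φ (qA m) := by
  classical
  have h2p : 2 < 1 / p := two_lt_inv_p hp0 hp
  set e : ℝ := 1 / p - 2 with he
  have hepos : 0 < e := by rw [he]; linarith
  set cp : ℝ := 2 * ((2 : ℝ)⁻¹ ^ 4) ^ (1 / p) / (4 : ℝ) ^ (1 / p - 1) with hcp
  have hcppos : 0 < cp := by
    rw [hcp]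
    have := Real.rpow_pos_of_pos (show (0:ℝ) < (2 : ℝ)⁻¹ ^ 4 by positivity) (1 / p)
    have := Real.rpow_pos_of_pos (show (0:ℝ) < (4:ℝ) by norm_num) (1 / p - 1)
    positivity
  have h5pos : (0 : ℝ) < (5 : ℝ) ^ e := Real.rpow_pos_of_pos (by norm_num) _
  set C : ℝ := (max K 0 + 1) * (5 : ℝ) ^ e / cp with hC
  obtain ⟨n, hn22, hnC⟩ : ∃ n : ℕ, n ≥ qA 2 + 1 ∧ C < (n : ℝ) ^ e / φ n := by
    have h := hφlimsup C
    rw [Filter.frequently_atTop] at h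
    obtain ⟨n, h1, h2⟩ := h (qA 2 + 1)
    exact ⟨n, h1, h2⟩
  rw [qA_two] at hn22
  have hn1 : 1 ≤ n := by omega
  set m := Nat.findGreatest (fun j => qA j ≤ n) n with hmdef
  have hm2 : 2 ≤ m := Nat.le_findGreatest (by omega) (by rw [qA_two]; omega)
  have hmn : m ≤ n := Nat.findGreatest_le n
  have hqmn : qA m ≤ n :=
    Nat.findGreatest_of_ne_zero (P := fun j => qA j ≤ n) (n := n) hmdef.symm (by omega)
  have hmltn : m < n := by
    rcases lt_or_eq_of_le hmn with h | h
    · exact h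
    · exfalso
      have h1 : qA n ≤ n := h ▸ hqmn
      have h2 : n < 4 ^ n := Nat.lt_pow_self (by norm_num)
      have := qA_lower n
      omega
  have hnot : ¬ (qA (m + 1) ≤ n) :=
    Nat.findGreatest_is_greatest (P := fun j => qA j ≤ n) (n := n) (k := m + 1)
      (by rw [← hmdef]; omega) (by omega)
  have h5q : n < 5 * qA m := by
    have h1 := qA_succ m
    have h2 : (4 : ℕ) ^ (m + 1) = 4 * 4 ^ m := by rw [pow_succ]; ring
    have h3 := qA_lower m
    omega
  refine ⟨m, hm2, ?_⟩
  have hqpos : (0 : ℝ) < (qA m : ℝ) := by exact_mod_cast qA_pos m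
  have hφq1 : 1 ≤ φ (qA m) := hφ1 _ (qA_pos m)
  have hφn1 : 1 ≤ φ n := hφ1 _ hn1
  have hdivq : (n : ℝ) / 5 ≤ (qA m : ℝ) := by
    have : (n : ℝ) < 5 * (qA m : ℝ) := by exact_mod_cast h5q
    linarith
  have hstepA : ((n : ℝ) / 5) ^ e ≤ (qA m : ℝ) ^ e :=
    Real.rpow_le_rpow (by positivity) hdivq hepos.le
  have hstepB : cp * ((n : ℝ) / 5) ^ e / φ n ≤ cp * (qA m : ℝ) ^ e / φ (qA m) := by
    apply div_le_div₀ (by positivity)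
      (mul_le_mul_of_nonneg_left hstepA hcppos.le) (by linarith)
      (hφmono _ _ (qA_pos m) hqmn)
  have hstepC : max K 0 + 1 ≤ cp * ((n : ℝ) / 5) ^ e / φ n := by
    have hφnpos : (0 : ℝ) < φ n := by linarith
    have hdr : ((n : ℝ) / 5) ^ e = (n : ℝ) ^ e / (5 : ℝ) ^ e :=
      Real.div_rpow (Nat.cast_nonneg n) (by norm_num : (0:ℝ) ≤ 5) e
    have hkey : cp * ((n : ℝ) / 5) ^ e / φ n = (cp / (5 : ℝ) ^ e) * ((n : ℝ) ^ e / φ n) := by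
      rw [hdr]
      field_simp
    rw [hkey]
    have hmul : (cp / (5 : ℝ) ^ e) * C < (cp / (5 : ℝ) ^ e) * ((n : ℝ) ^ e / φ n) :=
      mul_lt_mul_of_pos_left hnC (by positivity)
    have hCval : (cp / (5 : ℝ) ^ e) * C = max K 0 + 1 := by
      rw [hC]
      field_simp
    linarith
  have : K < max K 0 + 1 := by
    have := le_max_left K 0
    linarith
  calc K < max K 0 + 1 := this
    _ ≤ cp * ((n : ℝ) / 5) ^ e / φ n := hstepC
    _ ≤ cp * (qA m : ℝ) ^ e / φ (qA m) := hstepB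

end Endgame


/-- If `φ` is nondecreasing on `ℕ₊`, `φ ≥ 1`, and `limsup n^{1/p−2}/φ(n) = ∞`, then with
`f_m = D_{2^{2m+1}}^w − D_{2^{2m}}^w` and `q_m = 2^{2m}+⋯+2⁰`, the ratio of the weak `L^p`
norm of `σ_{q_m}^κ f_m / φ(q_m)` to `‖f_m*‖_p` is unbounded. -/
theorem maximal_kaczmarz_fejer_unbounded (p : ℝ) (hp0 : 0 < p) (hp : p < 1 / 2)
    (φ : ℕ → ℝ) (hφ1 : ∀ n : ℕ, 1 ≤ n → 1 ≤ φ n)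
    (hφmono : ∀ m n : ℕ, 1 ≤ m → m ≤ n → φ m ≤ φ n)
    (hφlimsup : ∀ C : ℝ, ∃ᶠ n : ℕ in Filter.atTop, C < (n : ℝ) ^ (1 / p - 2) / φ n) :
    (⨆ (m : ℕ) (_ : 1 ≤ m),
        wnorm (fun x => sigmaK (fm m) (qA m) x / φ (qA m)) p
          / (∫⁻ x, fstar (fm m) x ^ p ∂μ) ^ (1 / p)) = ⊤ := by
  by_contra hne
  obtain ⟨N, hN⟩ := ENNReal.exists_nat_gt hne
  obtain ⟨m, hm2, hK⟩ := choose_m hp0 hp φ hφ1 hφmono hφlimsup (N : ℝ)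
  have hφq : 0 < φ (qA m) := lt_of_lt_of_le one_pos (hφ1 _ (qA_pos m))
  have hqpos : (0 : ℝ) < (qA m : ℝ) := by exact_mod_cast qA_pos m
  have hBpos : (0 : ℝ) < (2 : ℝ) ^ (2 * m) * (((2 : ℝ))⁻¹ ^ (2 * m)) ^ (1 / p) := by
    have := Real.rpow_pos_of_pos (show (0:ℝ) < (2:ℝ)⁻¹ ^ (2*m) by positivity) (1 / p)
    positivity
  have h1 : ENNReal.ofReal
        ((2 / ((qA m : ℝ) * φ (qA m)) * (((2 : ℝ))⁻¹ ^ 4) ^ (1 / p))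
          / ((2 : ℝ) ^ (2 * m) * (((2 : ℝ))⁻¹ ^ (2 * m)) ^ (1 / p)))
      ≤ wnorm (fun x => sigmaK (fm m) (qA m) x / φ (qA m)) p
          / (∫⁻ x, fstar (fm m) x ^ p ∂μ) ^ (1 / p) := by
    rw [ENNReal.ofReal_div_of_pos hBpos]
    exact ENNReal.div_le_div (num_ge hp0 φ m hm2 hφq) (le_of_eq (den_eq hp0 m))
  have h2 : (N : ℝ)
      < (2 / ((qA m : ℝ) * φ (qA m)) * (((2 : ℝ))⁻¹ ^ 4) ^ (1 / p))
          / ((2 : ℝ) ^ (2 * m) * (((2 : ℝ))⁻¹ ^ (2 * m)) ^ (1 / p)) :=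
    lt_of_lt_of_le hK (AvalBval hp0 hp m (φ (qA m)) hφq)
  have h4 : wnorm (fun x => sigmaK (fm m) (qA m) x / φ (qA m)) p
        / (∫⁻ x, fstar (fm m) x ^ p ∂μ) ^ (1 / p)
      ≤ ⨆ (m : ℕ) (_ : 1 ≤ m),
          wnorm (fun x => sigmaK (fm m) (qA m) x / φ (qA m)) p
            / (∫⁻ x, fstar (fm m) x ^ p ∂μ) ^ (1 / p) :=
    le_iSup₂ (f := fun (m : ℕ) (_ : 1 ≤ m) =>
      wnorm (fun x => sigmaK (fm m) (qA m) x / φ (qA m)) p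
        / (∫⁻ x, fstar (fm m) x ^ p ∂μ) ^ (1 / p)) m (by omega)
  have h5 : (N : ℝ≥0∞)
      ≤ ⨆ (m : ℕ) (_ : 1 ≤ m),
          wnorm (fun x => sigmaK (fm m) (qA m) x / φ (qA m)) p
            / (∫⁻ x, fstar (fm m) x ^ p ∂μ) ^ (1 / p) := by
    calc (N : ℝ≥0∞) = ENNReal.ofReal ((N : ℝ)) := (ENNReal.ofReal_natCast N).symm
      _ ≤ ENNReal.ofReal _ := ENNReal.ofReal_le_ofReal h2.le
      _ ≤ _ := le_trans h1 h4
  exact absurd h5 (not_le.mpr hN)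
end
end

section
/- There exists a constant c > 0 such that for every m ≥ 3, with f_m := D_{2^{2m+1}}^w − D_{2^{2m}}^w and q_m := 2^{2m} + 2^{2m−2} + ⋯ + 2² + 2⁰, one has μ{ x ∈ G : |σ_{q_m}^κ f_m(x)| ≥ c · 4^{−m} } ≥ c. -/
open MeasureTheory ENNReal

noncomputable section

namespace Aux
open Finset

instance : IsProbabilityMeasure μ := ⟨by
  rw [show (Set.univ : Set G) = ((⊤ : TopologicalSpace.PositiveCompacts G) : Set G) from rfl]
  exact Measure.addHaarMeasure_self⟩

instance : μ.IsAddLeftInvariant := Measure.isAddLeftInvariant_addHaarMeasure _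

lemma zmod2_cases (a : ZMod 2) : a = 0 ∨ a = 1 := by revert a; decide

lemma neg_one_pow_val_add (a b : ZMod 2) :
    ((-1:ℝ)) ^ ((a + b).val) = (-1:ℝ) ^ a.val * (-1:ℝ) ^ b.val := by
  rcases zmod2_cases a with ha | ha <;> rcases zmod2_cases b with hb | hb <;>
    subst ha <;> subst hb <;>
    norm_num [show ((0:ZMod 2)).val = 0 from rfl, show ((1:ZMod 2)).val = 1 from rfl,
      show ((1:ZMod 2) + 1).val = 0 from rfl, show ((2:ZMod 2)).val = 0 from rfl]

lemma rad_pm (k : ℕ) (x : G) : rad k x = 1 ∨ rad k x = -1 := by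
  unfold rad
  rcases zmod2_cases (x k) with h | h <;> rw [h] <;>
    norm_num [show ((0:ZMod 2)).val = 0 from rfl, show ((1:ZMod 2)).val = 1 from rfl]

lemma rad_sq (k : ℕ) (x : G) : rad k x * rad k x = 1 := by
  rcases rad_pm k x with h | h <;> rw [h] <;> norm_num

lemma abs_rad (k : ℕ) (x : G) : |rad k x| = 1 := by
  rcases rad_pm k x with h | h <;> rw [h] <;> norm_num

/-- products of Rademacher functions over finite index sets -/
def W (S : Finset ℕ) (x : G) : ℝ := ∏ k ∈ S, rad k x

lemma W_mul_W (S T : Finset ℕ) (x : G) : W S x * W T x = W (symmDiff S T) x := by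
  classical
  have dS : Disjoint (S \ T) (S ∩ T) := Finset.sdiff_disjoint.mono_right Finset.inter_subset_right
  have dT : Disjoint (T \ S) (T ∩ S) := Finset.sdiff_disjoint.mono_right Finset.inter_subset_right
  have e1 : W S x = W (S \ T) x * W (S ∩ T) x := by
    unfold W; rw [← Finset.prod_union dS, Finset.sdiff_union_inter]
  have e2 : W T x = W (T \ S) x * W (S ∩ T) x := by
    unfold W; rw [Finset.inter_comm S T, ← Finset.prod_union dT, Finset.sdiff_union_inter]
  have e3 : W (symmDiff S T) x = W (S \ T) x * W (T \ S) x := by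
    unfold W; rw [symmDiff_def, Finset.sup_eq_union, Finset.prod_union disjoint_sdiff_sdiff]
  have e4 : W (S ∩ T) x * W (S ∩ T) x = 1 := by
    unfold W; rw [← Finset.prod_mul_distrib]
    exact Finset.prod_eq_one (fun k _ => rad_sq k x)
  rw [e1, e2, e3]
  calc (W (S\T) x * W (S∩T) x) * (W (T\S) x * W (S∩T) x)
      = (W (S\T) x * W (T\S) x) * (W (S∩T) x * W (S∩T) x) := by ring
    _ = W (S\T) x * W (T\S) x := by rw [e4, mul_one]

lemma continuous_rad (k : ℕ) : Continuous (rad k) := by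
  have h1 : Continuous (fun x : G => x k) := continuous_apply k
  exact (continuous_of_discreteTopology
    (f := fun a : ZMod 2 => ((-1:ℝ)) ^ a.val)).comp h1

lemma continuous_W (S : Finset ℕ) : Continuous (W S) := by
  unfold W
  exact continuous_finset_prod S (fun k _ => continuous_rad k)

lemma integrable_W (S : Finset ℕ) : Integrable (W S) μ :=
  (continuous_W S).integrable_of_hasCompactSupport (HasCompactSupport.of_compactSpace _)

lemma rad_add (k t : ℕ) (x : G) :
    rad k (e t + x) = (if k = t then (-1:ℝ) else 1) * rad k x := by
  unfold rad
  have : (e t + x) k = (e t) k + x k := rfl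
  rw [this, neg_one_pow_val_add]
  unfold e
  by_cases h : k = t
  · simp [h, show ((1:ZMod 2)).val = 1 from rfl]
  · simp [h, show ((0:ZMod 2)).val = 0 from rfl]

lemma W_add_e (S : Finset ℕ) {t : ℕ} (ht : t ∈ S) (x : G) : W S (e t + x) = - W S x := by
  classical
  unfold W
  have : ∀ k ∈ S, rad k (e t + x) = (if k = t then (-1:ℝ) else 1) * rad k x :=
    fun k _ => rad_add k t x
  rw [Finset.prod_congr rfl this, Finset.prod_mul_distrib, Finset.prod_ite_eq' S t
    (fun _ => (-1:ℝ))]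
  simp [ht]

lemma integral_W (S : Finset ℕ) : ∫ x, W S x ∂μ = if S = ∅ then 1 else 0 := by
  classical
  by_cases h : S = ∅
  · simp [h, W, integral_const, measure_univ]
  · rw [if_neg h]
    obtain ⟨t, ht⟩ := Finset.nonempty_iff_ne_empty.mpr h
    have h1 : ∫ x, W S (e t + x) ∂μ = ∫ x, W S x ∂μ :=
      integral_add_left_eq_self (W S) (e t)
    have h2 : ∫ x, W S (e t + x) ∂μ = - ∫ x, W S x ∂μ := by
      rw [← integral_neg]
      exact integral_congr_ae (Filter.Eventually.of_forall (fun x => W_add_e S ht x))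
    linarith [h1.symm.trans h2]

/-! ### bit sets -/

def bitset (n : ℕ) : Finset ℕ := (Finset.range (n+1)).filter (fun k => n.testBit k)

lemma testBit_le {n k : ℕ} (h : n.testBit k = true) : k ≤ n := by
  by_contra hc
  push_neg at hc
  have : n < 2 ^ k := lt_of_lt_of_le hc (Nat.le_of_lt (Nat.lt_two_pow_self (n := k)))
  rw [Nat.testBit_lt_two_pow this] at h
  exact Bool.false_ne_true h

lemma mem_bitset {k n : ℕ} : k ∈ bitset n ↔ n.testBit k = true := by
  unfold bitset
  simp only [Finset.mem_filter, Finset.mem_range]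
  constructor
  · exact fun h => h.2
  · exact fun h => ⟨Nat.lt_succ_of_le (testBit_le h), h⟩

lemma bitset_inj {a b : ℕ} (h : bitset a = bitset b) : a = b := by
  apply Nat.eq_of_testBit_eq
  intro i
  have := congrArg (fun S => i ∈ S) h
  simp only [eq_iff_iff] at this
  rw [mem_bitset, mem_bitset] at this
  cases hb : b.testBit i
  · cases ha : a.testBit i
    · rfl
    · exact absurd (this.mp ha) (by simp [hb])
  · exact this.mpr hb

lemma bitset_eq_filter {n M : ℕ} (h : n < 2 ^ M) :
    bitset n = (Finset.range M).filter (fun k => n.testBit k) := by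
  ext k
  rw [mem_bitset, Finset.mem_filter, Finset.mem_range]
  constructor
  · intro hk
    refine ⟨?_, hk⟩
    by_contra hc
    push_neg at hc
    have : n < 2 ^ k := lt_of_lt_of_le h (Nat.pow_le_pow_right (by norm_num) hc)
    rw [Nat.testBit_lt_two_pow this] at hk
    exact Bool.false_ne_true hk
  · exact fun h => h.2

lemma pow_toNat (b : Bool) (r : ℝ) : r ^ b.toNat = if b then r else 1 := by
  cases b <;> simp

lemma walsh_eq_W (n : ℕ) (x : G) : walsh n x = W (bitset n) x := by
  unfold walsh W bitset
  rw [Finset.prod_filter]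
  exact Finset.prod_congr rfl (fun k _ => pow_toNat _ _)

lemma walsh_eq_prod {M n : ℕ} (h : n < 2 ^ M) (x : G) :
    walsh n x = ∏ k ∈ Finset.range M, rad k x ^ (n.testBit k).toNat := by
  rw [walsh_eq_W, bitset_eq_filter h]
  unfold W
  rw [Finset.prod_filter]
  exact Finset.prod_congr rfl (fun k _ => (pow_toNat _ _).symm)

def kset (i : ℕ) : Finset ℕ :=
  if i = 0 then ∅ else
    insert (lg i) (((Finset.range (lg i)).filter (fun k => i.testBit k)).image
      (fun k => lg i - 1 - k))

lemma kacz_eq_W (i : ℕ) (x : G) : kacz i x = W (kset i) x := by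
  classical
  unfold kacz kset
  by_cases h : i = 0
  · simp [h, W]
  · rw [if_neg h, if_neg h]
    have hnot : lg i ∉ ((Finset.range (lg i)).filter (fun k => i.testBit k)).image
        (fun k => lg i - 1 - k) := by
      intro hmem
      obtain ⟨k, hk, hek⟩ := Finset.mem_image.mp hmem
      have : k < lg i := Finset.mem_range.mp (Finset.mem_filter.mp hk).1
      omega
    unfold W
    rw [Finset.prod_insert hnot]
    congr 1
    rw [Finset.prod_image ?inj]
    case inj =>
      intro a ha b hb hab
      have ha' : a < lg i := Finset.mem_range.mp (Finset.mem_filter.mp ha).1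
      have hb' : b < lg i := Finset.mem_range.mp (Finset.mem_filter.mp hb).1
      have hab' : lg i - 1 - a = lg i - 1 - b := hab
      omega
    rw [Finset.prod_filter]
    exact Finset.prod_congr rfl (fun k _ => pow_toNat _ _)

lemma mem_kset_le {j i : ℕ} (h : j ∈ kset i) : j ≤ lg i := by
  unfold kset at h
  by_cases hi : i = 0
  · rw [hi] at h; simp at h
  · rw [if_neg hi] at h
    rcases Finset.mem_insert.mp h with h | h
    · omega
    · obtain ⟨k, _, hek⟩ := Finset.mem_image.mp h
      omega

/-! ### numeric bit lemmas -/

lemma testBit_two_pow_add {A r : ℕ} (hr : r < 2 ^ A) (t : ℕ) :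
    (2 ^ A + r).testBit t =
      if t = A then true else if t < A then r.testBit t else false := by
  rcases lt_trichotomy t A with h | h | h
  · rw [if_neg (by omega), if_pos h]
    rw [Nat.testBit_eq_decide_div_mod_eq, Nat.testBit_eq_decide_div_mod_eq]
    have hA : 2 ^ A = 2 ^ t * 2 ^ (A - t) := by
      rw [← pow_add]; congr 1; omega
    rw [hA, Nat.mul_add_div (by positivity : 0 < 2 ^ t)]
    have : 2 ^ (A - t) = 2 * 2 ^ (A - t - 1) := by
      rw [← pow_succ']; congr 1; omega
    rw [this]
    rw [add_comm (2 * 2 ^ (A - t - 1)) (r / 2 ^ t), Nat.add_mul_mod_self_left]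
  · rw [if_pos h, h]
    rw [Nat.testBit_eq_decide_div_mod_eq]
    have h1 : (2 ^ A + r) / 2 ^ A = 1 := by
      rw [show 2 ^ A + r = 2 ^ A * 1 + r by ring, Nat.mul_add_div (by positivity),
        Nat.div_eq_of_lt hr]
    rw [h1]
    rfl
  · rw [if_neg (by omega), if_neg (by omega)]
    apply Nat.testBit_lt_two_pow
    calc 2 ^ A + r < 2 ^ A + 2 ^ A := by omega
      _ = 2 ^ (A + 1) := by ring
      _ ≤ 2 ^ t := Nat.pow_le_pow_right (by norm_num) (by omega)

lemma sum_two_pow_range (n : ℕ) : ∑ j ∈ Finset.range n, 2 ^ j = 2 ^ n - 1 := by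
  induction n with
  | zero => simp
  | succ n ih =>
      rw [Finset.sum_range_succ, ih]
      have : 1 ≤ 2 ^ n := Nat.one_le_two_pow
      omega

lemma testBit_sum_two_pow :
    ∀ (n : ℕ) (S : Finset ℕ), S ⊆ Finset.range n → ∀ t,
      (∑ j ∈ S, 2 ^ j).testBit t = decide (t ∈ S) := by
  intro n
  induction n with
  | zero =>
      intro S hS t
      have : S = ∅ := Finset.subset_empty.mp (by simpa using hS)
      simp [this]
  | succ n ih =>
      intro S hS t
      by_cases hn : n ∈ S
      · classical
        set S' := S.erase n with hS'
        have hSin : S = insert n S' := by rw [hS', Finset.insert_erase hn]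
        have hS'sub : S' ⊆ Finset.range n := by
          intro k hk
          have hk1 := Finset.mem_of_mem_erase hk
          have hk2 := Finset.ne_of_mem_erase hk
          have := Finset.mem_range.mp (hS hk1)
          exact Finset.mem_range.mpr (by omega)
        have hsum : ∑ j ∈ S, 2 ^ j = 2 ^ n + ∑ j ∈ S', 2 ^ j := by
          rw [hSin, Finset.sum_insert (Finset.notMem_erase n S)]
        have hlt : ∑ j ∈ S', 2 ^ j < 2 ^ n := by
          have hle : ∑ j ∈ S', 2 ^ j ≤ ∑ j ∈ Finset.range n, 2 ^ j :=
            Finset.sum_le_sum_of_subset hS'sub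
          rw [sum_two_pow_range] at hle
          have h1 : (1:ℕ) ≤ 2 ^ n := Nat.one_le_two_pow
          omega
        rw [hsum, testBit_two_pow_add hlt]
        rcases lt_trichotomy t n with h | h | h
        · rw [if_neg (by omega), if_pos h, ih S' hS'sub t]
          have hiff : (t ∈ S') ↔ (t ∈ S) := by
            rw [hS']
            constructor
            · exact Finset.mem_of_mem_erase
            · intro hts; exact Finset.mem_erase.mpr ⟨by omega, hts⟩
          simp [hiff]
        · rw [if_pos h, h]
          simp [hn]
        · rw [if_neg (by omega), if_neg (by omega)]
          have : t ∉ S := fun hc => by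
            have := Finset.mem_range.mp (hS hc); omega
          simp [this]
      · have hsub : S ⊆ Finset.range n := by
          intro k hk
          have := Finset.mem_range.mp (hS hk)
          exact Finset.mem_range.mpr (by rcases Nat.lt_succ_iff_lt_or_eq.mp this with h | h; exact h; exact absurd (h ▸ hk) hn)
        exact ih S hsub t

lemma bitset_sum_two_pow {S : Finset ℕ} {n : ℕ} (h : S ⊆ Finset.range n) :
    bitset (∑ j ∈ S, 2 ^ j) = S := by
  ext k
  rw [mem_bitset, testBit_sum_two_pow n S h k]
  simp

/-! ### arithmetic about `qA` -/

def PP (m : ℕ) : ℕ := ∑ i ∈ Finset.range m, 4 ^ i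

lemma three_PP (m : ℕ) : 3 * PP m + 1 = 4 ^ m := by
  induction m with
  | zero => simp [PP]
  | succ n ih =>
      unfold PP at *
      rw [Finset.sum_range_succ]
      rw [pow_succ]
      omega

lemma PP_lt (m : ℕ) : PP m < 4 ^ m := by
  have := three_PP m; omega

lemma qA_eq (m : ℕ) : qA m = PP m + 4 ^ m := by
  unfold qA PP; rw [Finset.sum_range_succ]

lemma qA_lt (m : ℕ) : qA m < 2 * 4 ^ m := by
  have := PP_lt m; have := qA_eq m; omega

lemma le_qA (m : ℕ) : 4 ^ m ≤ qA m := by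
  have := qA_eq m; omega

lemma two_pow_two_mul (m : ℕ) : 2 ^ (2 * m) = 4 ^ m := by
  rw [pow_mul]; norm_num

lemma two_pow_two_mul_succ (m : ℕ) : 2 ^ (2 * m + 1) = 2 * 4 ^ m := by
  rw [pow_succ, two_pow_two_mul]; ring

/-! ### the Kaczmarz coefficients of `fm` -/

lemma fm_eq_sum (m : ℕ) (x : G) :
    fm m x = ∑ k ∈ Finset.Ico (4 ^ m) (2 * 4 ^ m), walsh k x := by
  unfold fm DW
  rw [two_pow_two_mul, two_pow_two_mul_succ]
  rw [Finset.sum_Ico_eq_sub _ (by omega)]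

lemma integral_walsh_mul_kacz (k i : ℕ) :
    ∫ x, walsh k x * kacz i x ∂μ = if bitset k = kset i then 1 else 0 := by
  have : (fun x => walsh k x * kacz i x) = W (symmDiff (bitset k) (kset i)) := by
    funext x
    rw [walsh_eq_W, kacz_eq_W, W_mul_W]
  rw [show ∫ x, walsh k x * kacz i x ∂μ = ∫ x, W (symmDiff (bitset k) (kset i)) x ∂μ from by
    rw [this], integral_W]
  by_cases h : bitset k = kset i
  · rw [if_pos h, if_pos (by rw [← Finset.bot_eq_empty, symmDiff_eq_bot]; exact h)]
  · rw [if_neg h, if_neg (by rw [← Finset.bot_eq_empty, symmDiff_eq_bot]; exact h)]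

lemma integrable_walsh_mul_kacz (k i : ℕ) :
    Integrable (fun x => walsh k x * kacz i x) μ := by
  have : (fun x => walsh k x * kacz i x) = W (symmDiff (bitset k) (kset i)) := by
    funext x
    rw [walsh_eq_W, kacz_eq_W, W_mul_W]
  rw [this]
  exact integrable_W _

lemma testBit_top {m k : ℕ} (hk1 : 4 ^ m ≤ k) (hk2 : k < 2 * 4 ^ m) :
    k.testBit (2 * m) = true := by
  rw [Nat.testBit_eq_decide_div_mod_eq]
  have h1 : k / 2 ^ (2 * m) = 1 := by
    apply Nat.div_eq_of_lt_le
    · rw [one_mul, two_pow_two_mul]; exact hk1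
    · rw [two_pow_two_mul]; omega
  rw [h1]
  rfl

lemma mem_kset_lt_of_lt {i m : ℕ} (hi : i < 4 ^ m) {j : ℕ} (hj : j ∈ kset i) : j < 2 * m := by
  have h1 := mem_kset_le hj
  have h2 : i ≠ 0 := by
    intro h; rw [h] at hj; simp [kset] at hj
  have h3 : lg i < 2 * m := by
    unfold lg
    exact Nat.log_lt_of_lt_pow h2 (by rw [two_pow_two_mul]; exact hi)
  omega

lemma coefK_fm {m i : ℕ} (hi : i < qA m) :
    coefK (fm m) i = if 4 ^ m ≤ i then 1 else 0 := by
  unfold coefK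
  have hfm : ∀ x : G, fm m x * kacz i x
      = ∑ k ∈ Finset.Ico (4 ^ m) (2 * 4 ^ m), walsh k x * kacz i x := by
    intro x
    rw [fm_eq_sum, Finset.sum_mul]
  rw [integral_congr_ae (Filter.Eventually.of_forall (fun x => hfm x))]
  rw [integral_finset_sum _ (fun k _ => integrable_walsh_mul_kacz k i)]
  by_cases hge : 4 ^ m ≤ i
  · rw [if_pos hge]
    have hilt : i < 2 * 4 ^ m := lt_of_lt_of_le hi (le_of_lt (Aux.qA_lt m))
    have hlg : lg i = 2 * m := by
      unfold lg
      apply Nat.log_eq_of_pow_le_of_lt_pow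
      · rw [two_pow_two_mul]; exact hge
      · rw [pow_succ, two_pow_two_mul]; omega
    have hksub : kset i ⊆ Finset.range (2 * m + 1) := by
      intro j hj
      exact Finset.mem_range.mpr (by have := mem_kset_le hj; omega)
    set k₀ := ∑ j ∈ kset i, 2 ^ j with hk₀
    have hbit : bitset k₀ = kset i := bitset_sum_two_pow hksub
    have hne : i ≠ 0 := by
      have : 0 < 4 ^ m := by positivity
      omega
    have htop : 2 * m ∈ kset i := by
      unfold kset
      rw [if_neg hne, hlg]
      exact Finset.mem_insert_self _ _
    have hk₀ge : 4 ^ m ≤ k₀ := by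
      calc (4:ℕ) ^ m = 2 ^ (2 * m) := (two_pow_two_mul m).symm
        _ ≤ k₀ := Finset.single_le_sum (f := fun j => 2 ^ j) (fun j _ => Nat.zero_le _) htop
    have hk₀lt : k₀ < 2 * 4 ^ m := by
      have hle : k₀ ≤ ∑ j ∈ Finset.range (2 * m + 1), 2 ^ j :=
        Finset.sum_le_sum_of_subset hksub
      rw [sum_two_pow_range] at hle
      have : 2 ^ (2 * m + 1) = 2 * 4 ^ m := two_pow_two_mul_succ m
      have h1 : (1:ℕ) ≤ 2 ^ (2 * m + 1) := Nat.one_le_two_pow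
      omega
    have hmem : k₀ ∈ Finset.Ico (4 ^ m) (2 * 4 ^ m) := Finset.mem_Ico.mpr ⟨hk₀ge, hk₀lt⟩
    calc (∑ k ∈ Finset.Ico (4 ^ m) (2 * 4 ^ m), ∫ x, walsh k x * kacz i x ∂μ)
        = ∑ k ∈ Finset.Ico (4 ^ m) (2 * 4 ^ m), if k = k₀ then (1:ℝ) else 0 := by
          apply Finset.sum_congr rfl
          intro k _
          rw [integral_walsh_mul_kacz]
          congr 1
          · rw [eq_iff_iff]
            constructor
            · intro h; exact bitset_inj (h.trans hbit.symm)
            · intro h; rw [h, hbit]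
      _ = 1 := by rw [Finset.sum_ite_eq' _ k₀ (fun _ => (1:ℝ)), if_pos hmem]
  · rw [if_neg hge]
    push_neg at hge
    apply Finset.sum_eq_zero
    intro k hk
    obtain ⟨hk1, hk2⟩ := Finset.mem_Ico.mp hk
    rw [integral_walsh_mul_kacz, if_neg]
    intro hc
    have h1 : 2 * m ∈ bitset k := mem_bitset.mpr (testBit_top hk1 hk2)
    rw [hc] at h1
    exact absurd (mem_kset_lt_of_lt hge h1) (by omega)

/-! ### pointwise form of the Fejér mean -/

lemma sum_sum_range (g : ℕ → ℝ) (q : ℕ) :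
    ∑ j ∈ Finset.range q, ∑ i ∈ Finset.range j, g i
      = ∑ i ∈ Finset.range q, ((q - 1 - i : ℕ) : ℝ) * g i := by
  induction q with
  | zero => simp
  | succ q ih =>
      rw [Finset.sum_range_succ, ih, Finset.sum_range_succ (fun i => ((q + 1 - 1 - i : ℕ) : ℝ) * g i)]
      have h1 : ((q + 1 - 1 - q : ℕ) : ℝ) = 0 := by norm_num
      rw [h1, zero_mul, add_zero]
      rw [← Finset.sum_add_distrib]
      apply Finset.sum_congr rfl
      intro i hi
      have hiq : i < q := Finset.mem_range.mp hi
      have h2 : (q + 1 - 1 - i : ℕ) = (q - 1 - i) + 1 := by omega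
      rw [h2]
      push_cast
      ring

lemma kacz_high {m s : ℕ} (hm : 1 ≤ m) (hs : s < 4 ^ m) (x : G) :
    kacz (4 ^ m + s) x = rad (2 * m) x * walsh s (tau (2 * m) x) := by
  have h4 : (4:ℕ) ^ m = 2 ^ (2 * m) := (two_pow_two_mul m).symm
  have hne : 4 ^ m + s ≠ 0 := by positivity
  have hlg : lg (4 ^ m + s) = 2 * m := by
    unfold lg
    apply Nat.log_eq_of_pow_le_of_lt_pow
    · omega
    · rw [pow_succ]; omega
  unfold kacz
  rw [if_neg hne, hlg]
  congr 1
  have hbit : ∀ k < 2 * m, (4 ^ m + s).testBit k = s.testBit k := by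
    intro k hk
    rw [h4, testBit_two_pow_add (by omega), if_neg (by omega), if_pos hk]
  rw [walsh_eq_prod (show s < 2 ^ (2 * m) by omega)]
  apply Finset.prod_congr rfl
  intro k hk
  have hklt : k < 2 * m := Finset.mem_range.mp hk
  rw [hbit k hklt]
  congr 1
  unfold rad tau
  rw [if_pos hklt]

/-- the auxiliary kernel sums -/
def FF (P : ℕ) (y : G) : ℝ := ∑ s ∈ Finset.range P, ((P - 1 - s : ℕ) : ℝ) * walsh s y

lemma sigmaK_eq {m : ℕ} (hm : 1 ≤ m) (x : G) :
    sigmaK (fm m) (qA m) x = rad (2 * m) x * FF (PP m) (tau (2 * m) x) / (qA m : ℝ) := by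
  unfold sigmaK
  congr 1
  have hSK : ∀ j ∈ Finset.range (qA m), SK (fm m) j x
      = ∑ i ∈ Finset.range j, (if 4 ^ m ≤ i then (1:ℝ) else 0) * kacz i x := by
    intro j hj
    unfold SK
    apply Finset.sum_congr rfl
    intro i hi
    rw [coefK_fm (by
      have := Finset.mem_range.mp hj
      have := Finset.mem_range.mp hi
      omega)]
  rw [Finset.sum_congr rfl hSK]
  rw [sum_sum_range (fun i => (if 4 ^ m ≤ i then (1:ℝ) else 0) * kacz i x)]
  have hsplit : ∀ i ∈ Finset.range (qA m),
      ((qA m - 1 - i : ℕ) : ℝ) * ((if 4 ^ m ≤ i then (1:ℝ) else 0) * kacz i x)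
        = if 4 ^ m ≤ i then ((qA m - 1 - i : ℕ) : ℝ) * kacz i x else 0 := by
    intro i _
    by_cases h : 4 ^ m ≤ i <;> simp [h]
  rw [Finset.sum_congr rfl hsplit, ← Finset.sum_filter]
  have hfil : (Finset.range (qA m)).filter (fun i => 4 ^ m ≤ i)
      = Finset.Ico (4 ^ m) (qA m) := by
    ext i
    simp only [Finset.mem_filter, Finset.mem_range, Finset.mem_Ico]
    omega
  rw [hfil, Finset.sum_Ico_eq_sum_range]
  have hPP : qA m - 4 ^ m = PP m := by have := qA_eq m; omega
  rw [hPP]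
  unfold FF
  rw [Finset.mul_sum]
  apply Finset.sum_congr rfl
  intro s hs
  have hsP : s < PP m := Finset.mem_range.mp hs
  have hs4 : s < 4 ^ m := lt_of_lt_of_le hsP (le_of_lt (PP_lt m))
  rw [kacz_high hm hs4 x]
  have hco : (qA m - 1 - (4 ^ m + s) : ℕ) = (PP m - 1 - s : ℕ) := by
    have := qA_eq m; omega
  rw [hco]
  ring

/-! ### kernel recursions -/

lemma walsh_two_pow_add {A u : ℕ} (hu : u < 2 ^ A) (y : G) :
    walsh (2 ^ A + u) y = rad A y * walsh u y := by
  have hbit : bitset (2 ^ A + u) = insert A (bitset u) := by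
    ext t
    rw [mem_bitset, testBit_two_pow_add hu, Finset.mem_insert, mem_bitset]
    rcases lt_trichotomy t A with h | h | h
    · rw [if_neg (by omega), if_pos h]
      constructor
      · exact fun hb => Or.inr hb
      · rintro (hc | hb)
        · omega
        · exact hb
    · rw [if_pos h]
      simp [h]
    · rw [if_neg (by omega), if_neg (by omega)]
      constructor
      · intro hc; exact absurd hc Bool.false_ne_true
      · rintro (hc | hb)
        · omega
        · have : u < 2 ^ t := lt_of_lt_of_le hu (Nat.pow_le_pow_right (by norm_num) (by omega))
          rw [Nat.testBit_lt_two_pow this] at hb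
          exact absurd hb Bool.false_ne_true
  have hA : A ∉ bitset u := by
    rw [mem_bitset, Nat.testBit_lt_two_pow hu]
    exact Bool.false_ne_true
  rw [walsh_eq_W, walsh_eq_W, hbit]
  unfold W
  rw [Finset.prod_insert hA]

def Dy (A : ℕ) (y : G) : ℝ := ∑ s ∈ Finset.range (2 ^ A), walsh s y

def GG (A : ℕ) (y : G) : ℝ :=
  ∑ s ∈ Finset.range (2 ^ A), ((2 ^ A - 1 - s : ℕ) : ℝ) * walsh s y

lemma sum_range_split (f : ℕ → ℝ) (a c : ℕ) :
    ∑ s ∈ Finset.range (a + c), f s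
      = ∑ s ∈ Finset.range a, f s + ∑ u ∈ Finset.range c, f (a + u) := by
  have h1 : ∑ s ∈ Finset.range (a + c), f s
      = ∑ s ∈ Finset.range a, f s + ∑ s ∈ Finset.Ico a (a + c), f s := by
    rw [Finset.range_eq_Ico, Finset.range_eq_Ico]
    exact (Finset.sum_Ico_consecutive f (k := a + c) (Nat.zero_le a) (by omega)).symm
  rw [h1, Finset.sum_Ico_eq_sum_range, show a + c - a = c from by omega]

lemma Dy_succ (A : ℕ) (y : G) : Dy (A + 1) y = (1 + rad A y) * Dy A y := by
  unfold Dy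
  have h2 : 2 ^ (A + 1) = 2 ^ A + 2 ^ A := by ring
  rw [h2, sum_range_split (fun s => walsh s y) (2 ^ A) (2 ^ A)]
  have : ∀ u ∈ Finset.range (2 ^ A), walsh (2 ^ A + u) y = rad A y * walsh u y := by
    intro u hu
    exact walsh_two_pow_add (Finset.mem_range.mp hu) y
  rw [Finset.sum_congr rfl this, ← Finset.mul_sum]
  ring

lemma GG_succ (A : ℕ) (y : G) :
    GG (A + 1) y = (2 ^ A : ℝ) * Dy A y + (1 + rad A y) * GG A y := by
  unfold GG Dy
  have h2 : 2 ^ (A + 1) = 2 ^ A + 2 ^ A := by ring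
  rw [h2, sum_range_split (fun s => ((2 ^ A + 2 ^ A - 1 - s : ℕ) : ℝ) * walsh s y) (2 ^ A) (2 ^ A)]
  have e1 : ∀ s ∈ Finset.range (2 ^ A),
      ((2 ^ A + 2 ^ A - 1 - s : ℕ) : ℝ) * walsh s y
        = (2 ^ A : ℝ) * walsh s y + ((2 ^ A - 1 - s : ℕ) : ℝ) * walsh s y := by
    intro s hs
    have hs' : s < 2 ^ A := Finset.mem_range.mp hs
    have h3 : (2 ^ A + 2 ^ A - 1 - s : ℕ) = 2 ^ A + (2 ^ A - 1 - s) := by omega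
    rw [h3]
    push_cast
    ring
  have e2 : ∀ u ∈ Finset.range (2 ^ A),
      ((2 ^ A + 2 ^ A - 1 - (2 ^ A + u) : ℕ) : ℝ) * walsh (2 ^ A + u) y
        = rad A y * (((2 ^ A - 1 - u : ℕ) : ℝ) * walsh u y) := by
    intro u hu
    have hu' : u < 2 ^ A := Finset.mem_range.mp hu
    have h3 : (2 ^ A + 2 ^ A - 1 - (2 ^ A + u) : ℕ) = 2 ^ A - 1 - u := by omega
    rw [h3, walsh_two_pow_add hu' y]
    ring
  rw [Finset.sum_congr rfl e1, Finset.sum_congr rfl e2, Finset.sum_add_distrib,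
    ← Finset.mul_sum, ← Finset.mul_sum]
  ring

lemma FF_split {A R : ℕ} (hR : R ≤ 2 ^ A) (y : G) :
    FF (2 ^ A + R) y = (R : ℝ) * Dy A y + GG A y + rad A y * FF R y := by
  unfold FF GG Dy
  rw [sum_range_split (fun s => ((2 ^ A + R - 1 - s : ℕ) : ℝ) * walsh s y) (2 ^ A) R]
  have e1 : ∀ s ∈ Finset.range (2 ^ A),
      ((2 ^ A + R - 1 - s : ℕ) : ℝ) * walsh s y
        = (R : ℝ) * walsh s y + ((2 ^ A - 1 - s : ℕ) : ℝ) * walsh s y := by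
    intro s hs
    have hs' : s < 2 ^ A := Finset.mem_range.mp hs
    have h3 : (2 ^ A + R - 1 - s : ℕ) = R + (2 ^ A - 1 - s) := by omega
    rw [h3]
    push_cast
    ring
  have e2 : ∀ u ∈ Finset.range R,
      ((2 ^ A + R - 1 - (2 ^ A + u) : ℕ) : ℝ) * walsh (2 ^ A + u) y
        = rad A y * (((R - 1 - u : ℕ) : ℝ) * walsh u y) := by
    intro u hu
    have hu' : u < R := Finset.mem_range.mp hu
    have h3 : (2 ^ A + R - 1 - (2 ^ A + u) : ℕ) = R - 1 - u := by omega
    rw [h3, walsh_two_pow_add (by omega) y]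
    ring
  rw [Finset.sum_congr rfl e1, Finset.sum_congr rfl e2, Finset.sum_add_distrib,
    ← Finset.mul_sum, ← Finset.mul_sum]


/-! ### evaluation on the cylinder -/

lemma rad0 {y : G} (h0 : y 0 = 1) : rad 0 y = -1 := by
  unfold rad; rw [h0]; norm_num [show ((1:ZMod 2)).val = 1 from rfl]

lemma rad1 {y : G} (h1 : y 1 = 0) : rad 1 y = 1 := by
  unfold rad; rw [h1]; norm_num [show ((0:ZMod 2)).val = 0 from rfl]

lemma rad2 {y : G} (h2 : y 2 = 1) : rad 2 y = -1 := by
  unfold rad; rw [h2]; norm_num [show ((1:ZMod 2)).val = 1 from rfl]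

lemma walsh_zero (y : G) : walsh 0 y = 1 := by simp [walsh]

lemma walsh_one (y : G) : walsh 1 y = rad 0 y := by
  simp [walsh, Finset.prod_range_succ, Nat.testBit]

lemma Dy_one {y : G} (h0 : y 0 = 1) : Dy 1 y = 0 := by
  have he : Dy 1 y = walsh 0 y + walsh 1 y := by
    unfold Dy
    rw [show (2:ℕ) ^ 1 = 2 from rfl, Finset.sum_range_succ, Finset.sum_range_succ,
      Finset.sum_range_zero]
    ring
  rw [he, walsh_zero, walsh_one, rad0 h0]
  norm_num

lemma Dy_zero {y : G} (h0 : y 0 = 1) : ∀ A, 1 ≤ A → Dy A y = 0 := by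
  intro A hA
  induction A with
  | zero => omega
  | succ n ih =>
      by_cases hn : 1 ≤ n
      · rw [Dy_succ, ih hn, mul_zero]
      · have hn0 : n = 0 := by omega
        subst hn0
        exact Dy_one h0

lemma GG_zero {y : G} (h0 : y 0 = 1) (h2 : y 2 = 1) : ∀ A, 3 ≤ A → GG A y = 0 := by
  intro A hA
  induction A with
  | zero => omega
  | succ n ih =>
      by_cases hn : 3 ≤ n
      · rw [GG_succ, ih hn, mul_zero, add_zero, Dy_zero h0 n (by omega), mul_zero]
      · have hn2 : n = 2 := by omega
        subst hn2
        rw [GG_succ, Dy_zero h0 2 (by omega), mul_zero, zero_add, rad2 h2]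
        norm_num

lemma FF_PP_two {y : G} (h0 : y 0 = 1) (h1 : y 1 = 0) : FF (PP 2) y = 2 := by
  have hPP : PP 2 = 5 := by simp [PP, Finset.sum_range_succ]
  rw [hPP]
  have hw2 : walsh 2 y = rad 1 y := by
    simp [walsh, Finset.prod_range_succ, Nat.testBit]
  have hw3 : walsh 3 y = rad 0 y * rad 1 y := by
    simp [walsh, Finset.prod_range_succ, Nat.testBit]
  unfold FF
  rw [Finset.sum_range_succ, Finset.sum_range_succ, Finset.sum_range_succ,
    Finset.sum_range_succ, Finset.sum_range_succ, Finset.sum_range_zero]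
  rw [walsh_zero, walsh_one, hw2, hw3, rad0 h0, rad1 h1]
  norm_num

lemma FF_pm {y : G} (h0 : y 0 = 1) (h1 : y 1 = 0) (h2 : y 2 = 1) :
    ∀ m, 2 ≤ m → FF (PP m) y = 2 ∨ FF (PP m) y = -2 := by
  intro m hm
  induction m with
  | zero => omega
  | succ n ih =>
      by_cases hn : 2 ≤ n
      · have hPPs : PP (n + 1) = 2 ^ (2 * n) + PP n := by
          unfold PP
          rw [Finset.sum_range_succ, two_pow_two_mul]
          ring
        rw [hPPs, FF_split (le_of_lt (by rw [two_pow_two_mul]; exact PP_lt n)) y]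
        rw [Dy_zero h0 (2 * n) (by omega), GG_zero h0 h2 (2 * n) (by omega),
          mul_zero, zero_add, zero_add]
        rcases ih hn with h | h <;> rcases rad_pm (2 * n) y with hr | hr <;>
          rw [h, hr] <;> norm_num
      · have hn2 : n = 1 := by omega
        subst hn2
        exact Or.inl (FF_PP_two h0 h1)

/-! ### the measure of a 3-coordinate cylinder -/

def CylSet (a b c : ℕ) (p : ZMod 2 × ZMod 2 × ZMod 2) : Set G :=
  {x | x a = p.1 ∧ x b = p.2.1 ∧ x c = p.2.2}

lemma measurableSet_coord (a : ℕ) (u : ZMod 2) :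
    MeasurableSet {x : G | x a = u} := by
  have : ({x : G | x a = u}) = (fun x : G => x a) ⁻¹' {u} := rfl
  rw [this]
  exact ((continuous_apply a).isOpen_preimage _ (isOpen_discrete _)).measurableSet

lemma measurableSet_CylSet (a b c : ℕ) (p : ZMod 2 × ZMod 2 × ZMod 2) :
    MeasurableSet (CylSet a b c p) := by
  have : CylSet a b c p
      = {x : G | x a = p.1} ∩ ({x : G | x b = p.2.1} ∩ {x : G | x c = p.2.2}) := rfl
  rw [this]
  exact (measurableSet_coord a p.1).inter
    ((measurableSet_coord b p.2.1).inter (measurableSet_coord c p.2.2))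

lemma zmod2_add_eq_zero (u v : ZMod 2) : u + v = 0 ↔ v = u := by revert u v; decide

lemma measure_CylSet_eq {a b c : ℕ} (hab : a ≠ b) (hac : a ≠ c) (hbc : b ≠ c)
    (p : ZMod 2 × ZMod 2 × ZMod 2) :
    μ (CylSet a b c p) = μ (CylSet a b c (0, 0, 0)) := by
  classical
  set g : G := fun k => if k = a then p.1 else if k = b then p.2.1 else
    if k = c then p.2.2 else 0 with hg
  have hpre : (fun x : G => g + x) ⁻¹' (CylSet a b c (0, 0, 0)) = CylSet a b c p := by
    ext x
    have ga : g a = p.1 := by simp [hg]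
    have gb : g b = p.2.1 := by simp [hg, Ne.symm hab]
    have gc : g c = p.2.2 := by simp [hg, Ne.symm hac, Ne.symm hbc]
    simp only [Set.mem_preimage, CylSet, Set.mem_setOf_eq, Pi.add_apply, ga, gb, gc]
    rw [zmod2_add_eq_zero, zmod2_add_eq_zero, zmod2_add_eq_zero]
  rw [← hpre, measure_preimage_add]

lemma measure_CylSet {a b c : ℕ} (hab : a ≠ b) (hac : a ≠ c) (hbc : b ≠ c)
    (p : ZMod 2 × ZMod 2 × ZMod 2) :
    μ (CylSet a b c p) = 8⁻¹ := by
  classical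
  have hunion : (⋃ q : ZMod 2 × ZMod 2 × ZMod 2, CylSet a b c q) = Set.univ := by
    ext x
    simp only [Set.mem_iUnion, Set.mem_univ, iff_true]
    exact ⟨⟨x a, x b, x c⟩, rfl, rfl, rfl⟩
  have hdisj : Pairwise (Function.onFun Disjoint (CylSet a b c)) := by
    intro q r hqr
    rw [Function.onFun, Set.disjoint_left]
    intro x hx hx'
    apply hqr
    obtain ⟨h1, h2, h3⟩ := hx
    obtain ⟨h1', h2', h3'⟩ := hx'
    exact Prod.ext (h1 ▸ h1') (Prod.ext (h2 ▸ h2') (h3 ▸ h3'))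
  have hm := measure_iUnion (μ := μ) hdisj (fun q => measurableSet_CylSet a b c q)
  rw [hunion, measure_univ, tsum_fintype] at hm
  have hall : ∀ q : ZMod 2 × ZMod 2 × ZMod 2,
      μ (CylSet a b c q) = μ (CylSet a b c (0, 0, 0)) :=
    fun q => measure_CylSet_eq hab hac hbc q
  rw [Finset.sum_congr rfl (fun q _ => hall q), Finset.sum_const] at hm
  have hcard : (Finset.univ : Finset (ZMod 2 × ZMod 2 × ZMod 2)).card = 8 := by decide
  rw [hcard] at hm
  have h8 : (8 : ℝ≥0∞) * μ (CylSet a b c (0, 0, 0)) = 1 := by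
    rw [nsmul_eq_mul] at hm
    norm_num at hm
    exact hm.symm
  rw [hall p]
  calc μ (CylSet a b c (0, 0, 0))
      = ((8:ℝ≥0∞)⁻¹ * 8) * μ (CylSet a b c (0, 0, 0)) := by
        rw [ENNReal.inv_mul_cancel (by norm_num) (by norm_num), one_mul]
    _ = (8:ℝ≥0∞)⁻¹ * (8 * μ (CylSet a b c (0, 0, 0))) := by rw [mul_assoc]
    _ = 8⁻¹ := by rw [h8, mul_one]

end Aux

/-- There is `c > 0` so that `μ{ |σ_{q_m}^κ f_m| ≥ c·4^{−m} } ≥ c` for all `m ≥ 3`. -/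
theorem measure_lower_bound_for_sigma_qm :
    ∃ c : ℝ, 0 < c ∧ ∀ m : ℕ, 3 ≤ m →
      ENNReal.ofReal c ≤ μ {x : G | c / 4 ^ m ≤ |sigmaK (fm m) (qA m) x|} := by
  refine ⟨1/8, by norm_num, ?_⟩
  intro m hm
  have hab : 2*m-1 ≠ 2*m-2 := by omega
  have hac : 2*m-1 ≠ 2*m-3 := by omega
  have hbc : 2*m-2 ≠ 2*m-3 := by omega
  have hsub : Aux.CylSet (2*m-1) (2*m-2) (2*m-3) (1,0,1)
      ⊆ {x : G | (1/8 : ℝ) / 4 ^ m ≤ |sigmaK (fm m) (qA m) x|} := by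
    intro x hx
    obtain ⟨hxa, hxb, hxc⟩ := hx
    have hy0 : tau (2*m) x 0 = 1 := by
      show (if 0 < 2*m then x (2*m - 1 - 0) else x 0) = 1
      rw [if_pos (by omega)]
      exact hxa
    have hy1 : tau (2*m) x 1 = 0 := by
      show (if 1 < 2*m then x (2*m - 1 - 1) else x 1) = 0
      rw [if_pos (by omega), show 2*m-1-1 = 2*m-2 from by omega]
      exact hxb
    have hy2 : tau (2*m) x 2 = 1 := by
      show (if 2 < 2*m then x (2*m - 1 - 2) else x 2) = 1
      rw [if_pos (by omega), show 2*m-1-2 = 2*m-3 from by omega]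
      exact hxc
    have hFF := Aux.FF_pm hy0 hy1 hy2 m (by omega)
    have hσ := Aux.sigmaK_eq (show 1 ≤ m by omega) x
    have hqpos : (0:ℝ) < (qA m : ℝ) := by
      have := Aux.le_qA m
      have h4 : (1:ℕ) ≤ 4 ^ m := Nat.one_le_pow _ _ (by norm_num)
      exact_mod_cast by omega
    have habs : |sigmaK (fm m) (qA m) x| = 2 / (qA m : ℝ) := by
      rw [hσ, abs_div, abs_mul, Aux.abs_rad, one_mul,
        abs_of_nonneg (le_of_lt hqpos)]
      rcases hFF with h | h <;> rw [h] <;> norm_num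
    rw [Set.mem_setOf_eq, habs]
    have hq2 : (qA m : ℝ) ≤ 2 * 4 ^ m := by exact_mod_cast le_of_lt (Aux.qA_lt m)
    rw [div_le_div_iff₀ (by positivity) hqpos]
    have h4 : (0:ℝ) < 4 ^ m := by positivity
    nlinarith
  calc ENNReal.ofReal (1/8)
      ≤ μ (Aux.CylSet (2*m-1) (2*m-2) (2*m-3) (1,0,1)) := by
        rw [Aux.measure_CylSet hab hac hbc]
        rw [show (1:ℝ)/8 = (8:ℝ)⁻¹ by norm_num,
          ENNReal.ofReal_inv_of_pos (by norm_num), ENNReal.ofReal_ofNat]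
    _ ≤ μ {x : G | (1/8 : ℝ) / 4 ^ m ≤ |sigmaK (fm m) (qA m) x|} := measure_mono hsub
end
end
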